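/- arXiv:1311.7625 — 15 statements merged into one kernel-verified Lean document; each statement's English description precedes it below -/
import Mathlib

section
/- Let X be a topological space with at least 3 points. If for every x ∈ X the subspace X \ {x} is a T₀ space, then X is a T₀ space. -/
theorem t0_reconstructible (X : Type*) [TopologicalSpace X]
    (hcard : 3 ≤ Cardinal.mk X)
    (h : ∀ x : X, T0Space ({x}ᶜ : Set X)) : T0Space X :=
  T0Space.of_cover fun x y _ ↦
    let ⟨z, hzx, hzy⟩ := Cardinal.exists_ne_ne_of_three_le hcard x y
    ⟨{z}ᶜ, Ne.symm hzx, Ne.symm hzy, h z⟩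
end

section
/- Let X be a topological space with at least 3 points. If for every x ∈ X the subspace X \ {x} is a T₁ space, then X is a T₁ space. -/
/-!
Closing up `{y}` can only add points outside any subspace that contains `y` and is T₁. With at
least three points there are two distinct points `x₁ ≠ x₂`, both different from `y`; the cards at
`x₁` and `x₂` confine `closure {y}` to `{y, x₁} ∩ {y, x₂} = {y}`.
-/

open Topology

lemma closure_singleton_subset_insert_compl {X : Type*} [TopologicalSpace X] {s : Set X}
    [T1Space s] {y : X} (hy : y ∈ s) : closure {y} ⊆ insert y sᶜ := by
  intro z hz
  by_contra hz_notMem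
  obtain ⟨hzy, hzs⟩ : z ≠ y ∧ z ∈ s := by simpa [not_or] using hz_notMem
  have hclosure : (⟨z, hzs⟩ : s) ∈ closure {⟨y, hy⟩} := by
    rw [IsInducing.subtypeVal.closure_eq_preimage_closure_image]
    simpa using hz
  rw [closure_singleton] at hclosure
  exact hzy (congrArg Subtype.val hclosure)

theorem t1_reconstructible (X : Type*) [TopologicalSpace X]
    (hcard : 3 ≤ Cardinal.mk X)
    (h : ∀ x : X, T1Space ({x}ᶜ : Set X)) : T1Space X := by
  refine ⟨fun y => closure_subset_iff_isClosed.mp fun z hz => ?_⟩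
  obtain ⟨x₁, hx₁y, -⟩ := Cardinal.exists_ne_ne_of_three_le hcard y y
  obtain ⟨x₂, hx₂y, hx₂x₁⟩ := Cardinal.exists_ne_ne_of_three_le hcard y x₁
  have h₁ := closure_singleton_subset_insert_compl (s := {x₁}ᶜ) (Ne.symm hx₁y) hz
  have h₂ := closure_singleton_subset_insert_compl (s := {x₂}ᶜ) (Ne.symm hx₂y) hz
  simp only [compl_compl, Set.mem_insert_iff, Set.mem_singleton_iff] at h₁ h₂ ⊢
  grind
end

section
/- Let X be a topological space with at least 3 points. If for every x ∈ X the subspace X \ {x} is Hausdorff, then X is Hausdorff. -/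
/-!
Given two distinct points `x, y`, pick a third point `z`; both lie in the Hausdorff card at `z`.
Specialization `x ⤳ y` passes to that card, where it forces `x = y`, so `X` is T1. Then the card
at `z` is open, hence the neighbourhood filters of `x` and `y` in it are those in `X`, and they
are disjoint because the card is Hausdorff.
-/

open Filter Topology

section

variable {X : Type*} [TopologicalSpace X] {s : Set X} {x y : X}

theorem Specializes.eq_of_mem_of_t1Space_subtype [T1Space s] (h : x ⤳ y) (hx : x ∈ s)
    (hy : y ∈ s) : x = y :=
  congrArg Subtype.val ((subtype_specializes_iff ⟨x, hx⟩ ⟨y, hy⟩).2 h).eq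

theorem IsOpen.disjoint_nhds_nhds_of_t2Space_subtype [T2Space s] (hs : IsOpen s) (hx : x ∈ s)
    (hy : y ∈ s) (hxy : x ≠ y) : Disjoint (𝓝 x) (𝓝 y) := by
  have hsub : Disjoint (𝓝 (⟨x, hx⟩ : s)) (𝓝 ⟨y, hy⟩) :=
    disjoint_nhds_nhds.2 fun h => hxy (congrArg Subtype.val h)
  rwa [← Filter.disjoint_map Subtype.val_injective, map_nhds_subtype_val, map_nhds_subtype_val,
    hs.nhdsWithin_eq hx, hs.nhdsWithin_eq hy] at hsub

end

theorem t2_reconstructible (X : Type*) [TopologicalSpace X]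
    (hcard : 3 ≤ Cardinal.mk X)
    (h : ∀ x : X, T2Space ({x}ᶜ : Set X)) : T2Space X := by
  have : T1Space X := t1Space_iff_specializes_imp_eq.2 fun x y hxy => by
    by_contra hne
    obtain ⟨z, hzx, hzy⟩ := Cardinal.exists_ne_ne_of_three_le hcard x y
    exact hne (hxy.eq_of_mem_of_t1Space_subtype (s := {z}ᶜ) hzx.symm hzy.symm)
  refine t2Space_iff_disjoint_nhds.2 fun x y hxy => ?_
  obtain ⟨z, hzx, hzy⟩ := Cardinal.exists_ne_ne_of_three_le hcard x y
  exact isOpen_compl_singleton.disjoint_nhds_nhds_of_t2Space_subtype hzx.symm hzy.symm hxy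
end

section
/- Let X be a topological space with at least 3 points. If for every x ∈ X the subspace X \ {x} is regular Hausdorff (T₃), then X is regular Hausdorff. -/
/-!
Specialization between two points can be read off in any subspace containing both, so
removing a third point shows that X is T₁. Then every X \ {z} is an open regular subspace. To
separate a closed set C from a ∉ C, remove some z ∉ C other than a: C and a live in the open
subspace X \ {z}, where they have disjoint neighbourhoods, which are neighbourhoods in X. If
there is no such z, then C = X \ {a} is clopen and separates itself from a.
-/

open Filter Topology

theorem exists_ne_ne_of_three_le_mk {X : Type*} (hcard : 3 ≤ Cardinal.mk X) (x y : X) :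
    ∃ z : X, z ≠ x ∧ z ≠ y := by
  obtain ⟨z, hz⟩ := Cardinal.exists_notMem_of_length_lt [x, y]
    (by simpa using (show (2 : Cardinal) < 3 by norm_num).trans_le hcard)
  simp only [List.mem_cons, List.not_mem_nil, or_false, not_or] at hz
  exact ⟨z, hz⟩

theorem T1Space.of_compl_singleton {X : Type*} [TopologicalSpace X]
    (hthird : ∀ x y : X, ∃ z : X, z ≠ x ∧ z ≠ y) (h : ∀ z : X, T1Space ({z}ᶜ : Set X)) :
    T1Space X := by
  refine t1Space_iff_specializes_imp_eq.mpr fun x y hxy => ?_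
  obtain ⟨z, hzx, hzy⟩ := hthird x y
  have hsub : (⟨x, hzx.symm⟩ : ({z}ᶜ : Set X)) ⤳ ⟨y, hzy.symm⟩ :=
    Topology.IsInducing.subtypeVal.specializes_iff.mp hxy
  exact congrArg Subtype.val hsub.eq

theorem IsOpen.disjoint_nhdsSet_nhds_of_regularSpace {X : Type*} [TopologicalSpace X]
    {Y : Set X} (hY : IsOpen Y) [RegularSpace Y] {C : Set X} (hC : IsClosed C) (hCY : C ⊆ Y)
    {a : X} (haY : a ∈ Y) (ha : a ∉ C) : Disjoint (𝓝ˢ C) (𝓝 a) := by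
  have hsep : Disjoint (𝓝ˢ ((↑) ⁻¹' C : Set Y)) (𝓝 ⟨a, haY⟩) :=
    disjoint_nhdsSet_nhds.mpr (by rwa [(hC.preimage continuous_subtype_val).closure_eq])
  have hmap : map (↑) (𝓝ˢ ((↑) ⁻¹' C : Set Y)) = 𝓝ˢ C := by
    rw [hY.isOpenMap_subtype_val.map_nhdsSet_eq continuous_subtype_val,
      Set.image_preimage_eq_of_subset (by rwa [Subtype.range_val])]
  rw [← hmap, ← hY.isOpenEmbedding_subtypeVal.map_nhds_eq ⟨a, haY⟩]
  exact (disjoint_map Subtype.val_injective).mpr hsep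

theorem RegularSpace.of_compl_singleton {X : Type*} [TopologicalSpace X] [T1Space X]
    (h : ∀ z : X, RegularSpace ({z}ᶜ : Set X)) : RegularSpace X := by
  refine ⟨fun {C a} hC ha => ?_⟩
  by_cases hz : ∃ z, z ∉ C ∧ z ≠ a
  · obtain ⟨z, hzC, hza⟩ := hz
    exact isOpen_compl_singleton.disjoint_nhdsSet_nhds_of_regularSpace hC
      (fun c hc (hcz : c = z) => hzC (hcz ▸ hc)) hza.symm ha
  · push Not at hz
    have hCa : C = {a}ᶜ := Set.ext fun z =>
      ⟨fun hzC (hza : z = a) => ha (hza ▸ hzC), fun hza => not_imp_comm.mp (hz z) hza⟩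
    rw [(hCa ▸ isOpen_compl_singleton : IsOpen C).nhdsSet_eq, disjoint_principal_left]
    exact hC.isOpen_compl.mem_nhds ha

theorem t3_reconstructible (X : Type*) [TopologicalSpace X]
    (hcard : 3 ≤ Cardinal.mk X)
    (h : ∀ x : X, T3Space ({x}ᶜ : Set X)) : T3Space X := by
  have : T1Space X :=
    T1Space.of_compl_singleton (exists_ne_ne_of_three_le_mk hcard) fun _ => inferInstance
  have : RegularSpace X := RegularSpace.of_compl_singleton fun _ => inferInstance
  infer_instance
end

section
/- Let X be a topological space with at least 3 points. If for every x ∈ X the subspace X \ {x} is completely regular Hausdorff (Tychonoff), then X is Tychonoff. -/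
open Set Filter Topology unitInterval

lemma pair_ne_univ' {X : Type*} (hcard : 3 ≤ Cardinal.mk X) (a b : X) :
    ({a, b} : Set X) ≠ Set.univ := by
  intro hab
  have h2 : Cardinal.mk ({a, b} : Set X) ≤ 2 := by
    calc Cardinal.mk ({a, b} : Set X) ≤ Cardinal.mk ({b} : Set X) + 1 :=
          Cardinal.mk_insert_le
      _ ≤ 1 + 1 := by rw [Cardinal.mk_singleton]
      _ = 2 := one_add_one_eq_two
  rw [hab, Cardinal.mk_univ] at h2
  have : (3 : Cardinal) ≤ 2 := le_trans hcard h2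
  norm_num at this

lemma exists_third' {X : Type*} (hcard : 3 ≤ Cardinal.mk X) (a b : X) :
    ∃ c : X, c ≠ a ∧ c ≠ b := by
  have := pair_ne_univ' hcard a b
  rcases Set.ne_univ_iff_exists_notMem _ |>.mp this with ⟨c, hc⟩
  simp only [Set.mem_insert_iff, Set.mem_singleton_iff, not_or] at hc
  exact ⟨c, hc.1, hc.2⟩

theorem tychonoff_reconstructible (X : Type*) [TopologicalSpace X]
    (hcard : 3 ≤ Cardinal.mk X)
    (h : ∀ x : X, T35Space ({x}ᶜ : Set X)) : T35Space X := by
  classical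
  -- Step 1: X is T1
  haveI ht1 : T1Space X := by
    rw [t1Space_iff_exists_open]
    intro x y hxy
    obtain ⟨z, hzx, hzy⟩ := exists_third' hcard x y
    haveI := h z
    have hx : x ∈ ({z}ᶜ : Set X) := by simp [Ne.symm hzx]
    have hy : y ∈ ({z}ᶜ : Set X) := by simp [Ne.symm hzy]
    have hne : (⟨x, hx⟩ : ({z}ᶜ : Set X)) ≠ ⟨y, hy⟩ := by
      simp [Subtype.ext_iff, hxy]
    obtain ⟨U, hUo, hxU, hyU⟩ := t1Space_iff_exists_open.mp inferInstance hne
    obtain ⟨V, hVo, hVU⟩ := isOpen_induced_iff.mp hUo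
    refine ⟨V, hVo, ?_, ?_⟩
    · rw [← hVU] at hxU; exact hxU
    · intro hyV
      exact hyU (by rw [← hVU]; exact hyV)
  -- Step 2: completely regular
  haveI : CompletelyRegularSpace X := by
    constructor
    intro x K hK hxK
    obtain ⟨z1, hz1x, _⟩ := exists_third' hcard x x
    obtain ⟨z2, hz2x, hz21⟩ := exists_third' hcard x z1
    have key : ∀ z w : X, z ≠ x → w ≠ x → w ≠ z →
        ∃ g : X → ℝ, ContinuousOn g {z}ᶜ ∧ g x = 0 ∧ (∀ y, y ∈ K ∪ {z, w} → g y = 1) ∧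
          (∀ y, g y ∈ I) := by
      intro z w hzx hwx hwz
      haveI := h z
      have hx : x ∈ ({z}ᶜ : Set X) := by simp [Ne.symm hzx]
      have hKc : IsClosed (Subtype.val ⁻¹' (K ∪ {w}) : Set ({z}ᶜ : Set X)) :=
        (hK.union isClosed_singleton).preimage continuous_subtype_val
      have hxKc : (⟨x, hx⟩ : ({z}ᶜ : Set X)) ∉ Subtype.val ⁻¹' (K ∪ {w}) := by
        simp [hxK, Ne.symm hwx]
      obtain ⟨f, hfc, hfx, hfK⟩ :=
        CompletelyRegularSpace.completely_regular _ _ hKc hxKc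
      refine ⟨fun y => if hy : y = z then 1 else (f ⟨y, by simp [hy]⟩ : ℝ), ?_, ?_, ?_, ?_⟩
      · rw [continuousOn_iff_continuous_restrict]
        refine (continuous_subtype_val.comp hfc).congr fun p => ?_
        have hp : (p : X) ≠ z := p.prop
        simp [Set.restrict, hp]
      · simp only [dif_neg (Ne.symm hzx)]
        exact congrArg Subtype.val hfx
      · intro y hy
        by_cases hyz : y = z
        · simp [hyz]
        · have hy' : (⟨y, by simp [hyz]⟩ : ({z}ᶜ : Set X)) ∈ Subtype.val ⁻¹' (K ∪ {w}) := by
            rcases hy with hy | hy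
            · exact Or.inl hy
            · rcases hy with hy | hy
              · exact absurd hy hyz
              · exact Or.inr hy
          simp only [dif_neg hyz]
          exact congrArg Subtype.val (hfK hy')
      · intro y
        by_cases hyz : y = z
        · simp only [dif_pos hyz]; exact ⟨zero_le_one, le_refl 1⟩
        · simp only [dif_neg hyz]
          exact (f ⟨y, by simp [hyz]⟩).prop
    obtain ⟨g1, hg1c, hg1x, hg1K, hg1I⟩ := key z1 z2 hz1x hz2x hz21
    obtain ⟨g2, hg2c, hg2x, hg2K, hg2I⟩ := key z2 z1 hz2x hz1x (Ne.symm hz21)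
    set g : X → ℝ := fun y => max (g1 y) (g2 y) with hg
    have hopen1 : IsOpen ({z1}ᶜ : Set X) := isOpen_compl_singleton
    have hopen2 : IsOpen ({z2}ᶜ : Set X) := isOpen_compl_singleton
    have hgI : ∀ y, g y ∈ I := fun y =>
      ⟨le_max_of_le_left (hg1I y).1, max_le (hg1I y).2 (hg2I y).2⟩
    have hgc : Continuous g := by
      rw [continuous_iff_continuousAt]
      intro y
      by_cases hy1 : y = z1
      · subst hy1
        have hc2 : ContinuousAt g2 y :=
          hg2c.continuousAt (hopen2.mem_nhds (by
            simp only [Set.mem_compl_iff, Set.mem_singleton_iff]; exact Ne.symm hz21))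
        have hv2 : g2 y = 1 := hg2K y (Or.inr (Or.inr rfl))
        have hv1 : g1 y = 1 := hg1K y (Or.inr (Or.inl rfl))
        have ht : Tendsto g (𝓝 y) (𝓝 1) := by
          apply tendsto_of_tendsto_of_tendsto_of_le_of_le
            (by rw [← hv2]; exact hc2) (tendsto_const_nhds (x := (1:ℝ)))
          · exact fun t => le_max_right _ _
          · exact fun t => max_le (hg1I t).2 (hg2I t).2
        have hgy : g y = 1 := by simp [hg, hv1, hv2]
        rw [ContinuousAt, hgy]; exact ht
      · by_cases hy2 : y = z2
        · subst hy2
          have hc1 : ContinuousAt g1 y :=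
            hg1c.continuousAt (hopen1.mem_nhds (by
              simp only [Set.mem_compl_iff, Set.mem_singleton_iff]; exact hz21))
          have hv1 : g1 y = 1 := hg1K y (Or.inr (Or.inr rfl))
          have hv2 : g2 y = 1 := hg2K y (Or.inr (Or.inl rfl))
          have ht : Tendsto g (𝓝 y) (𝓝 1) := by
            apply tendsto_of_tendsto_of_tendsto_of_le_of_le
              (by rw [← hv1]; exact hc1) (tendsto_const_nhds (x := (1:ℝ)))
            · exact fun t => le_max_left _ _
            · exact fun t => max_le (hg1I t).2 (hg2I t).2
          have hgy : g y = 1 := by simp [hg, hv1, hv2]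
          rw [ContinuousAt, hgy]; exact ht
        · exact (hg1c.continuousAt (hopen1.mem_nhds (by simp [hy1]))).max
            (hg2c.continuousAt (hopen2.mem_nhds (by simp [hy2])))
    refine ⟨fun y => ⟨g y, hgI y⟩, hgc.subtype_mk _, ?_, ?_⟩
    · ext; simp [hg, hg1x, hg2x]
    · intro y hy
      have h1 : g1 y = 1 := hg1K y (Or.inl hy)
      have h2 : g2 y = 1 := hg2K y (Or.inl hy)
      ext; simp [hg, h1, h2]
  exact ⟨⟩
end

section
/- Let X be a topological space with at least 3 points such that every card X \ {x} (x ∈ X) is T₃, and suppose at least one card is T₄ (normal Hausdorff). Then X is T₄. -/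
/-!
Since `X` has at least three points, two distinct points both lie in the card at some third
point `x`, where they are separated; hence `X` is T₁ and every card is an open subspace.
A point `a` and a closed set `s ∌ a` are separated inside the card at any `z ∉ s ∪ {a}`; if there
is no such `z`, then `s = {a}ᶜ` and `{a}` is clopen. Finally let `x₀` be a point whose card is
normal and `s`, `t` disjoint closed sets, say `x₀ ∉ t`. The card at `x₀` separates `s \ {x₀}`
from `t`, and regularity of `X` separates `x₀` from `t`.
-/

open Set Filter Topology

section

variable {X : Type*} [TopologicalSpace X]

theorem t1Space_of_three_le_of_t1Space_compl_singleton (hcard : 3 ≤ Cardinal.mk X)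
    (h : ∀ x : X, T1Space ({x}ᶜ : Set X)) : T1Space X := by
  refine t1Space_iff_specializes_imp_eq.2 fun p q hpq => ?_
  by_contra hne
  obtain ⟨x, hxp, hxq⟩ := Cardinal.exists_ne_ne_of_three_le hcard p q
  have hpq' : (⟨p, hxp.symm⟩ : ({x}ᶜ : Set X)) ⤳ ⟨q, hxq.symm⟩ :=
    (subtype_specializes_iff _ _).2 hpq
  exact hne (congrArg Subtype.val hpq'.eq)

theorem IsOpen.map_subtypeVal_nhdsSet_preimage {S : Set X} (hS : IsOpen S) (s : Set X) :
    map (↑) (𝓝ˢ ((↑) ⁻¹' s : Set S)) = 𝓝ˢ (S ∩ s) := by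
  rw [hS.isOpenMap_subtype_val.map_nhdsSet_eq continuous_subtype_val, Subtype.image_preimage_coe]

theorem regularSpace_of_regularSpace_compl_singleton [T1Space X]
    (h : ∀ x : X, RegularSpace ({x}ᶜ : Set X)) : RegularSpace X := by
  refine ⟨fun {s a} hs has => ?_⟩
  by_cases hz : ∃ z, z ∉ s ∧ z ≠ a
  · obtain ⟨z, hzs, hza⟩ := hz
    have hS : IsOpen ({z}ᶜ : Set X) := isOpen_compl_singleton
    have hsS : {z}ᶜ ∩ s = s := inter_eq_right.2 fun y hy (hyz : y = z) => hzs (hyz ▸ hy)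
    rw [← hsS, ← hS.map_subtypeVal_nhdsSet_preimage,
      ← hS.isOpenEmbedding_subtypeVal.map_nhds_eq ⟨a, hza.symm⟩]
    exact (disjoint_map Subtype.val_injective).2 <|
      RegularSpace.regular (hs.preimage continuous_subtype_val) has
  · push Not at hz
    have hs_eq : s = {a}ᶜ := by
      ext y
      exact ⟨fun hy (hya : y = a) => has (hya ▸ hy), fun hy => by_contra fun hys => hy (hz y hys)⟩
    have ha_open : IsOpen ({a} : Set X) := by
      rw [← isClosed_compl_iff, ← hs_eq]; exact hs
    rw [hs_eq, isOpen_compl_singleton.nhdsSet_eq, (isOpen_singleton_iff_nhds_eq_pure a).1 ha_open]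
    simp

theorem normalSpace_of_normalSpace_compl_singleton [T1Space X] [RegularSpace X] (x₀ : X)
    [NormalSpace ({x₀}ᶜ : Set X)] : NormalSpace X := by
  have hS : IsOpen ({x₀}ᶜ : Set X) := isOpen_compl_singleton
  have key : ∀ s t : Set X, IsClosed s → IsClosed t → Disjoint s t → x₀ ∉ t →
      Disjoint (𝓝ˢ s) (𝓝ˢ t) := by
    intro s t hs ht hst hx₀t
    have htS : {x₀}ᶜ ∩ t = t := inter_eq_right.2 fun y hy (hyx : y = x₀) => hx₀t (hyx ▸ hy)
    have hrest : Disjoint (𝓝ˢ ({x₀}ᶜ ∩ s)) (𝓝ˢ t) := by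
      rw [← htS, ← hS.map_subtypeVal_nhdsSet_preimage, ← hS.map_subtypeVal_nhdsSet_preimage]
      exact (disjoint_map Subtype.val_injective).2 <| disjoint_nhdsSet_nhdsSet
        (hs.preimage continuous_subtype_val) (ht.preimage continuous_subtype_val)
        (hst.preimage _)
    have hpoint : Disjoint (𝓝 x₀) (𝓝ˢ t) := (RegularSpace.regular ht hx₀t).symm
    have hs_le : 𝓝ˢ s ≤ 𝓝ˢ ({x₀}ᶜ ∩ s) ⊔ 𝓝 x₀ := by
      rw [← nhdsSet_singleton, ← nhdsSet_union]
      exact nhdsSet_mono fun y hy => or_iff_not_imp_right.2 fun hy₀ => ⟨hy₀, hy⟩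
    exact (hrest.sup_left hpoint).mono_left hs_le
  refine ⟨fun s t hs ht hst => separatedNhds_iff_disjoint.2 ?_⟩
  by_cases hx₀t : x₀ ∈ t
  · exact (key t s ht hs hst.symm fun hx₀s => hst.ne_of_mem hx₀s hx₀t rfl).symm
  · exact key s t hs ht hst hx₀t

end

theorem t4_reconstructible (X : Type*) [TopologicalSpace X]
    (hcard : 3 ≤ Cardinal.mk X)
    (h3 : ∀ x : X, T3Space ({x}ᶜ : Set X))
    (h4 : ∃ x : X, T4Space ({x}ᶜ : Set X)) : T4Space X := by
  have : T1Space X := t1Space_of_three_le_of_t1Space_compl_singleton hcard fun x => by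
    have := h3 x; infer_instance
  have : RegularSpace X :=
    regularSpace_of_regularSpace_compl_singleton fun x => (h3 x).toRegularSpace
  obtain ⟨x₀, _⟩ := h4
  have : NormalSpace X := normalSpace_of_normalSpace_compl_singleton x₀
  exact {}
end

section
/- Let X be a topological space with at least 3 points. If for every x ∈ X the subspace X \ {x} is completely normal Hausdorff (T₅), then X is T₅. -/
open Set Topology Filter

theorem t5_reconstructible (X : Type*) [TopologicalSpace X]
    (hcard : 3 ≤ Cardinal.mk X)
    (h : ∀ x : X, T5Space ({x}ᶜ : Set X)) : T5Space X := by
  -- First, X is T1.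
  haveI ht1 : T1Space X := by
    refine ⟨fun a => isClosed_of_closure_subset fun b hb => ?_⟩
    by_contra hba
    have hba' : b ≠ a := hba
    obtain ⟨c, hca, hcb⟩ := Cardinal.three_le hcard a b
    haveI := h c
    set S := ({c}ᶜ : Set X)
    have ha : a ∈ S := by simp [S, hca.symm]
    have hbS : b ∈ S := by simp [S, hcb.symm]
    have hb' : (⟨b, hbS⟩ : S) ∈ closure ({⟨a, ha⟩} : Set S) := by
      rw [closure_subtype]
      simpa using hb
    rw [(isClosed_singleton (x := (⟨a, ha⟩ : S))).closure_eq] at hb'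
    exact hba' (congrArg Subtype.val hb')
  refine { toT1Space := inferInstance, completely_normal := fun s t hd1 hd2 => ?_ }
  rw [← separatedNhds_iff_disjoint]
  have hst : Disjoint s t := hd2.mono_right subset_closure
  by_cases hU : s ∪ t = univ
  · -- s and t are complementary clopen sets
    have htc : IsClosed t := isClosed_of_closure_subset fun x hx => by
      rcases (hU ▸ mem_univ x : x ∈ s ∪ t) with hxs | hxt
      · exact absurd (mem_inter hxs hx) (by
          rw [Set.disjoint_iff_inter_eq_empty] at hd2; simp [hd2])
      · exact hxt
    have hsc : IsClosed s := isClosed_of_closure_subset fun x hx => by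
      rcases (hU ▸ mem_univ x : x ∈ s ∪ t) with hxs | hxt
      · exact hxs
      · exact absurd (mem_inter hx hxt) (by
          rw [Set.disjoint_iff_inter_eq_empty] at hd1; simp [hd1])
    have hseq : s = tᶜ := by
      apply Subset.antisymm
      · exact hst.subset_compl_right
      · intro x hx
        rcases (hU ▸ mem_univ x : x ∈ s ∪ t) with hxs | hxt
        · exact hxs
        · exact absurd hxt hx
    exact ⟨s, t, hseq ▸ htc.isOpen_compl,
      (by rw [union_comm] at hU
          have : t = sᶜ := by
            apply Subset.antisymm
            · exact hst.symm.subset_compl_right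
            · intro x hx
              rcases (hU ▸ mem_univ x : x ∈ t ∪ s) with hxt | hxs
              · exact hxt
              · exact absurd hxs hx
          exact this ▸ hsc.isOpen_compl),
      Subset.rfl, Subset.rfl, hst⟩
  · obtain ⟨c, hc⟩ := ne_univ_iff_exists_notMem _ |>.1 hU
    haveI := h c
    set S := ({c}ᶜ : Set X) with hS
    have hSopen : IsOpen S := isOpen_compl_singleton
    set s' : Set S := Subtype.val ⁻¹' s with hs'
    set t' : Set S := Subtype.val ⁻¹' t with ht'
    have hsep : SeparatedNhds s' t' := by
      rw [separatedNhds_iff_disjoint]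
      apply completely_normal
      · exact (hd1.preimage Subtype.val).mono_left
          (continuous_subtype_val.closure_preimage_subset s)
      · exact (hd2.preimage Subtype.val).mono_right
          (continuous_subtype_val.closure_preimage_subset t)
    obtain ⟨U, V, hUo, hVo, hsU, htV, hUV⟩ := hsep
    refine ⟨Subtype.val '' U, Subtype.val '' V,
      hSopen.isOpenMap_subtype_val _ hUo, hSopen.isOpenMap_subtype_val _ hVo,
      ?_, ?_, (Set.disjoint_image_iff Subtype.val_injective).2 hUV⟩
    · intro x hx
      have hxS : x ∈ S := by
        intro hxc; rw [mem_singleton_iff] at hxc; subst hxc; exact hc (Or.inl hx)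
      exact ⟨⟨x, hxS⟩, hsU hx, rfl⟩
    · intro x hx
      have hxS : x ∈ S := by
        intro hxc; rw [mem_singleton_iff] at hxc; subst hxc; exact hc (Or.inr hx)
      exact ⟨⟨x, hxS⟩, htV hx, rfl⟩
end

section
/- Let X be a T₁ space, and fix a topological property P. Then X is locally P if and only if for every x ∈ X the card X \ {x} is locally P, where 'X is locally P' means that for every point x and every open neighbourhood U of x there is a set A with x in the interior of A, A ⊆ U, and A (with the subspace topology) satisfying P. -/
/-! Being locally `P` passes to open subspaces and can be checked on an open cover. In a T₁
space every card `X \ {x}` is open, and with two points the cards cover `X`. -/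

/-- The subspace `S` of `X` is "locally P": every point of `S` has, inside every open
neighbourhood, a neighbourhood (relative to `S`) that is a subset satisfying `P`. -/
def LocallyPOn {X : Type*} [TopologicalSpace X] (P : Set X → Prop) (S : Set X) : Prop :=
  ∀ x ∈ S, ∀ U : Set X, IsOpen U → x ∈ U →
    ∃ A : Set X, A ⊆ S ∧ A ⊆ U ∧ (∃ V : Set X, IsOpen V ∧ x ∈ V ∧ V ∩ S ⊆ A) ∧ P A

section

variable {X : Type*} [TopologicalSpace X] {P : Set X → Prop}

theorem LocallyPOn.mono_of_isOpen {S T : Set X} (hT : LocallyPOn P T) (hS : IsOpen S)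
    (hST : S ⊆ T) : LocallyPOn P S := by
  intro x hx U hU hxU
  obtain ⟨A, -, hAUS, ⟨V, hV, hxV, hVA⟩, hPA⟩ := hT x (hST hx) (U ∩ S) (hU.inter hS) ⟨hxU, hx⟩
  exact ⟨A, fun a ha => (hAUS ha).2, fun a ha => (hAUS ha).1,
    ⟨V, hV, hxV, fun a ha => hVA ⟨ha.1, hST ha.2⟩⟩, hPA⟩

theorem locallyPOn_of_isOpen_cover {S : Set X}
    (h : ∀ x ∈ S, ∃ W : Set X, IsOpen W ∧ x ∈ W ∧ W ⊆ S ∧ LocallyPOn P W) :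
    LocallyPOn P S := by
  intro x hx U hU hxU
  obtain ⟨W, hW, hxW, hWS, hPW⟩ := h x hx
  obtain ⟨A, hAW, hAU, ⟨V, hV, hxV, hVA⟩, hPA⟩ := hPW x hxW U hU hxU
  exact ⟨A, hAW.trans hWS, hAU, ⟨V ∩ W, hV.inter hW, ⟨hxV, hxW⟩, fun a ha => hVA ha.1⟩, hPA⟩

end

theorem local_properties_reconstructible (X : Type*) [TopologicalSpace X] [T1Space X]
    [Nontrivial X] (P : Set X → Prop) :
    LocallyPOn P (Set.univ : Set X) ↔ ∀ x : X, LocallyPOn P ({x}ᶜ : Set X) := by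
  refine ⟨fun h x => h.mono_of_isOpen isOpen_compl_singleton (Set.subset_univ _), fun h => ?_⟩
  refine locallyPOn_of_isOpen_cover fun y _ => ?_
  obtain ⟨z, hz⟩ := exists_ne y
  exact ⟨{z}ᶜ, isOpen_compl_singleton, hz.symm, Set.subset_univ _, h z⟩
end

section
/- Let X be a topological space with at least 2 points. Then the weight of X equals the supremum over x ∈ X of the weights of the subspaces X \ {x}. -/
/-!
A base of the card `{p}ᶜ` lifts to a family of open sets of `X` of the same size by sending `v`
to the largest open set of `X` that meets `{p}ᶜ` inside `v`, namely `interior (insert p v)`.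
These sets form a base of `X` up to the point `p`: every neighbourhood `u` of a point `a ≠ p`
contains one of them around `a`, after `p` is added to `u`. Doing this at two distinct points
`p ≠ q` and intersecting removes the defect, as long as `a` differs from both; in an infinite
space three points suffice for this, and the resulting base has size at most the supremum of the
weights of the cards. A finite space has weight `ℵ₀`.
-/

open Cardinal TopologicalSpace

/-- The weight of a topological space: the least cardinality of a base, taken to be
at least `ℵ₀`. -/
noncomputable def wt (X : Type u) [TopologicalSpace X] : Cardinal.{u} :=
  max Cardinal.aleph0
    (sInf {c : Cardinal.{u} | ∃ B : Set (Set X), IsTopologicalBasis B ∧ Cardinal.mk B = c})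

open Set Topology

variable {X Y : Type u} [TopologicalSpace X] [TopologicalSpace Y]

variable (X) in
theorem aleph0_le_wt : ℵ₀ ≤ wt X :=
  le_max_left _ _

theorem wt_le_of_isTopologicalBasis {B : Set (Set X)} (hB : IsTopologicalBasis B) {κ : Cardinal}
    (hBκ : #B ≤ κ) (hκ : ℵ₀ ≤ κ) : wt X ≤ κ :=
  calc wt X ≤ max ℵ₀ #B := max_le_max le_rfl (csInf_le' ⟨B, hB, rfl⟩)
    _ ≤ κ := max_le hκ hBκ

variable (X) in
theorem exists_isTopologicalBasis_mk_le_wt :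
    ∃ B : Set (Set X), IsTopologicalBasis B ∧ #B ≤ wt X := by
  have hne : {c : Cardinal | ∃ B : Set (Set X), IsTopologicalBasis B ∧ #B = c}.Nonempty :=
    ⟨_, _, isTopologicalBasis_opens, rfl⟩
  obtain ⟨B, hB, hBc⟩ := csInf_mem hne
  exact ⟨B, hB, hBc.trans_le (le_max_right _ _)⟩

theorem Topology.IsInducing.wt_le {f : Y → X} (hf : IsInducing f) : wt Y ≤ wt X := by
  obtain ⟨B, hB, hBX⟩ := exists_isTopologicalBasis_mk_le_wt X
  exact wt_le_of_isTopologicalBasis (hB.isInducing hf) (mk_image_le.trans hBX) (aleph0_le_wt X)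

theorem wt_eq_aleph0 [Finite X] : wt X = ℵ₀ :=
  (wt_le_of_isTopologicalBasis isTopologicalBasis_opens (lt_aleph0_of_finite _).le le_rfl).antisymm
    (aleph0_le_wt X)

def IsBasisAwayFrom (F : Set (Set X)) (p : X) : Prop :=
  ∀ a u, a ≠ p → a ∈ u → IsOpen u → ∃ s ∈ F, a ∈ s ∧ s ⊆ insert p u

theorem IsBasisAwayFrom.mono {F G : Set (Set X)} {p : X} (hF : IsBasisAwayFrom F p)
    (hFG : F ⊆ G) : IsBasisAwayFrom G p := fun a u hap hau hu =>
  let ⟨s, hsF, has, hsu⟩ := hF a u hap hau hu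
  ⟨s, hFG hsF, has, hsu⟩

theorem IsBasisAwayFrom.exists_inter_subset {F : Set (Set X)} {p q : X}
    (hp : IsBasisAwayFrom F p) (hq : IsBasisAwayFrom F q) (hpq : p ≠ q) {a : X} (hap : a ≠ p)
    (haq : a ≠ q) {u : Set X} (hau : a ∈ u) (hu : IsOpen u) :
    ∃ s ∈ image2 (· ∩ ·) F F, a ∈ s ∧ s ⊆ u := by
  obtain ⟨s, hsF, has, hsu⟩ := hp a u hap hau hu
  obtain ⟨t, htF, hat, htu⟩ := hq a u haq hau hu
  refine ⟨s ∩ t, mem_image2_of_mem hsF htF, ⟨has, hat⟩, fun b ⟨hbs, hbt⟩ => ?_⟩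
  rcases hsu hbs with rfl | hbu
  · exact (htu hbt).resolve_left hpq
  · exact hbu

theorem isTopologicalBasis_image2_inter {F : Set (Set X)} (hF : ∀ s ∈ F, IsOpen s) {x y z : X}
    (hx : IsBasisAwayFrom F x) (hy : IsBasisAwayFrom F y) (hz : IsBasisAwayFrom F z)
    (hxy : x ≠ y) (hxz : x ≠ z) (hyz : y ≠ z) :
    IsTopologicalBasis (image2 (· ∩ ·) F F) := by
  refine isTopologicalBasis_of_isOpen_of_nhds ?_ fun a u hau hu => ?_
  · rintro _ ⟨s, hs, t, ht, rfl⟩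
    exact (hF s hs).inter (hF t ht)
  rcases eq_or_ne a x with rfl | hax
  · exact hy.exists_inter_subset hz hyz hxy hxz hau hu
  rcases eq_or_ne a y with rfl | hay
  · exact hx.exists_inter_subset hz hxz hax hyz hau hu
  · exact hx.exists_inter_subset hy hxy hax hay hau hu

theorem subset_interior_insert_image_val {p : X} {v : Set ({p}ᶜ : Set X)} (hv : IsOpen v) :
    Subtype.val '' v ⊆ interior (insert p (Subtype.val '' v)) := by
  obtain ⟨t, ht, rfl⟩ := isOpen_induced_iff.1 hv
  have hts : t ⊆ insert p (Subtype.val '' (Subtype.val ⁻¹' t : Set ({p}ᶜ : Set X))) :=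
    fun b hbt => (eq_or_ne b p).imp id fun hbp => ⟨⟨b, hbp⟩, hbt, rfl⟩
  exact (image_preimage_subset _ _).trans (interior_maximal hts ht)

theorem isBasisAwayFrom_image_interior_insert {p : X} {B : Set (Set ({p}ᶜ : Set X))}
    (hB : IsTopologicalBasis B) :
    IsBasisAwayFrom ((fun v => interior (insert p (Subtype.val '' v))) '' B) p := by
  intro a u hap hau hu
  obtain ⟨v, hvB, hav, hvu⟩ := hB.exists_subset_of_mem_open
    (show (⟨a, hap⟩ : ({p}ᶜ : Set X)) ∈ Subtype.val ⁻¹' u from hau)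
    (hu.preimage continuous_subtype_val)
  refine ⟨_, mem_image_of_mem _ hvB, subset_interior_insert_image_val (hB.isOpen hvB) ⟨_, hav, rfl⟩,
    interior_subset.trans (insert_subset_insert (image_subset_iff.2 hvu))⟩

theorem exists_isBasisAwayFrom_mk_le_wt (p : X) :
    ∃ F : Set (Set X), (∀ s ∈ F, IsOpen s) ∧ IsBasisAwayFrom F p ∧ #F ≤ wt ({p}ᶜ : Set X) := by
  obtain ⟨B, hB, hBw⟩ := exists_isTopologicalBasis_mk_le_wt ({p}ᶜ : Set X)
  refine ⟨_, ?_, isBasisAwayFrom_image_interior_insert hB, mk_image_le.trans hBw⟩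
  rintro _ ⟨v, -, rfl⟩
  exact isOpen_interior

theorem wt_le_of_forall_wt_compl_le [Infinite X] {κ : Cardinal} (hκ : ℵ₀ ≤ κ)
    (h : ∀ p : X, wt ({p}ᶜ : Set X) ≤ κ) : wt X ≤ κ := by
  let e := Infinite.natEmbedding X
  have he : ∀ {i j : ℕ}, i ≠ j → e i ≠ e j := e.injective.ne
  choose F hFopen hFaway hFcard using exists_isBasisAwayFrom_mk_le_wt (X := X)
  let G := F (e 0) ∪ F (e 1) ∪ F (e 2)
  have hGopen : ∀ s ∈ G, IsOpen s := by
    rintro s ((hs | hs) | hs) <;> exact hFopen _ s hs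
  have hG : #G ≤ κ :=
    calc #G ≤ #(F (e 0)) + #(F (e 1)) + #(F (e 2)) :=
          (mk_union_le _ _).trans (add_le_add_left (mk_union_le _ _) _)
      _ ≤ κ + κ + κ := by gcongr <;> exact (hFcard _).trans (h _)
      _ = κ := by rw [add_eq_self hκ, add_eq_self hκ]
  refine wt_le_of_isTopologicalBasis (isTopologicalBasis_image2_inter hGopen
    ((hFaway (e 0)).mono (subset_union_left.trans subset_union_left))
    ((hFaway (e 1)).mono (subset_union_right.trans subset_union_left))
    ((hFaway (e 2)).mono subset_union_right)
    (he (by decide)) (he (by decide)) (he (by decide))) ?_ hκ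
  calc #(image2 (· ∩ ·) G G) ≤ #G * #G := mk_image2_le
    _ ≤ κ * κ := mul_le_mul' hG hG
    _ = κ := mul_eq_self hκ

theorem weight_reconstructible (X : Type u) [TopologicalSpace X]
    (hcard : 2 ≤ Cardinal.mk X) :
    wt X = ⨆ x : X, wt ({x}ᶜ : Set X) := by
  obtain ⟨x₀⟩ : Nonempty X := mk_ne_zero_iff.1 (by positivity)
  have hbdd : BddAbove (range fun x : X => wt ({x}ᶜ : Set X)) := bddAbove_of_small
  have hκ : ℵ₀ ≤ ⨆ x : X, wt ({x}ᶜ : Set X) := (aleph0_le_wt _).trans (le_ciSup hbdd x₀)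
  refine le_antisymm ?_ (ciSup_le' fun x => IsInducing.subtypeVal.wt_le)
  rcases finite_or_infinite X with _ | _
  · exact wt_eq_aleph0.trans_le hκ
  · exact wt_le_of_forall_wt_compl_le hκ (le_ciSup hbdd)
end

section
/- Let X be a topological space with at least 2 points. Then the density of X equals the infimum over x ∈ X of the densities of the subspaces X \ {x}. -/
/-!
Adding a single point to a dense subset of the card at `x` gives a dense subset of `X`, so
`d(X) ≤ d(X \ {x})` for every `x` (the `ℵ₀` floor absorbs the extra point). Conversely, take a
dense `s ⊆ X` of minimal size: if `s` misses some point `x`, then `s` is already dense in the card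
at `x`; otherwise `s = X`, and every card has density at most `max ℵ₀ |X|`.
-/

/-- The density of a topological space: the least cardinality of a dense subset, taken to be
at least `ℵ₀`. -/
noncomputable def dens (X : Type u) [TopologicalSpace X] : Cardinal.{u} :=
  max Cardinal.aleph0
    (sInf {c : Cardinal.{u} | ∃ s : Set X, Dense s ∧ Cardinal.mk s = c})

open Cardinal Set

section Density

variable {X : Type*} [TopologicalSpace X]

theorem Dense.dens_le {s : Set X} (hs : Dense s) : dens X ≤ max ℵ₀ #s :=
  max_le_max le_rfl (csInf_le' ⟨s, hs, rfl⟩)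

theorem exists_dense_dens_eq (X : Type*) [TopologicalSpace X] :
    ∃ s : Set X, Dense s ∧ dens X = max ℵ₀ #s := by
  obtain ⟨s, hs, hmk⟩ := csInf_mem (⟨_, univ, dense_univ, rfl⟩ :
    {c : Cardinal | ∃ s : Set X, Dense s ∧ #s = c}.Nonempty)
  exact ⟨s, hs, by rw [dens, hmk]⟩

theorem dens_le_max_aleph0_mk (X : Type*) [TopologicalSpace X] : dens X ≤ max ℵ₀ #X := by
  simpa only [mk_univ] using (dense_univ (X := X)).dens_le

theorem Dense.image_val_union_compl {Y : Set X} {t : Set Y} (ht : Dense t) :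
    Dense (Subtype.val '' t ∪ Yᶜ) := by
  intro x
  by_cases hx : x ∈ Y
  · exact closure_mono subset_union_left (Subtype.dense_iff.mp ht hx)
  · exact subset_closure (subset_union_right hx)

theorem dens_le_dens_of_finite_compl {Y : Set X} (hY : Yᶜ.Finite) : dens X ≤ dens Y := by
  obtain ⟨t, ht, hdens⟩ := exists_dense_dens_eq Y
  have hcard : #(Subtype.val '' t ∪ Yᶜ : Set X) ≤ max ℵ₀ #t := by
    refine (mk_union_le _ _).trans (add_le_of_le (le_max_left _ _) ?_ ?_)
    · exact mk_image_le.trans (le_max_right _ _)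
    · exact hY.lt_aleph0.le.trans (le_max_left _ _)
  calc dens X ≤ max ℵ₀ #(Subtype.val '' t ∪ Yᶜ : Set X) := ht.image_val_union_compl.dens_le
    _ ≤ max ℵ₀ #t := max_le (le_max_left _ _) hcard
    _ = dens Y := hdens.symm

theorem Dense.dens_subtype_le {s Y : Set X} (hs : Dense s) (hsY : s ⊆ Y) :
    dens Y ≤ max ℵ₀ #s := by
  have hsub : s ⊆ range (Subtype.val : Y → X) := by rwa [Subtype.range_coe]
  have hdense : Dense (Subtype.val ⁻¹' s : Set Y) := by
    rw [Subtype.dense_iff, image_preimage_eq_of_subset hsub]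
    exact fun y _ ↦ hs y
  calc dens Y ≤ max ℵ₀ #(Subtype.val ⁻¹' s : Set Y) := hdense.dens_le
    _ = max ℵ₀ #s := by
      rw [mk_preimage_of_injective_of_subset_range _ _ Subtype.val_injective hsub]

theorem exists_dens_compl_singleton_le [Nonempty X] : ∃ x : X, dens ({x}ᶜ : Set X) ≤ dens X := by
  obtain ⟨s, hs, hdens⟩ := exists_dense_dens_eq X
  rw [hdens]
  by_cases hsX : s = Set.univ
  · obtain ⟨x⟩ := ‹Nonempty X›
    refine ⟨x, (dens_le_max_aleph0_mk _).trans (max_le_max le_rfl ?_)⟩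
    rw [hsX, mk_univ]
    exact mk_subtype_le _
  · obtain ⟨x, hx⟩ := (ne_univ_iff_exists_notMem s).mp hsX
    exact ⟨x, hs.dens_subtype_le fun y hy ↦ by rintro rfl; exact hx hy⟩

end Density

theorem density_reconstructible (X : Type u) [TopologicalSpace X]
    (hcard : 2 ≤ Cardinal.mk X) :
    dens X = ⨅ x : X, dens ({x}ᶜ : Set X) := by
  have : Nonempty X := mk_ne_zero_iff.mp (lt_of_lt_of_le two_pos hcard).ne'
  obtain ⟨x, hx⟩ := exists_dens_compl_singleton_le (X := X)
  exact le_antisymm (le_ciInf fun y ↦ dens_le_dens_of_finite_compl (by simp))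
    ((ciInf_le' _ x).trans hx)
end

section
/- Let X be a Tychonoff space. Then X is Čech-complete if and only if for every x ∈ X the subspace X \ {x} is Čech-complete. -/
/-!
Čech-completeness of a Tychonoff space does not depend on the compactification: if `X` is Gδ
in a compactification `L`, then `X` is exactly the preimage of itself under the extension
`βX → L`, hence Gδ in `βX`; and `βX` maps onto any other compactification `K` by a closed map
under which `X` is again its own preimage, so `X` is Gδ in `K`. Thus an open subspace `s` is
Čech-complete iff `s` is Gδ in `βX`, and `X`, being the union of two open cards
`{x}ᶜ ∪ {y}ᶜ`, is Gδ in `βX` as soon as both cards are.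
-/

/-- A space is Čech-complete if it embeds densely into some compact Hausdorff space
as a Gδ subset (equivalently, it is Gδ in some/every compactification). -/
def CechComplete (X : Type u) [TopologicalSpace X] : Prop :=
  ∃ (K : Type u) (_ : TopologicalSpace K), CompactSpace K ∧ T2Space K ∧
    ∃ e : X → K, Topology.IsEmbedding e ∧ DenseRange e ∧ IsGδ (Set.range e)

universe u v

open Set Filter Topology

section General

variable {X Y Z : Type*} [TopologicalSpace X] [TopologicalSpace Y] [TopologicalSpace Z]

lemma Topology.IsInducing.isGδ_iff {f : X → Y} (hf : IsInducing f) {s : Set X} :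
    IsGδ s ↔ ∃ t, IsGδ t ∧ f ⁻¹' t = s := by
  refine ⟨fun hs => ?_, fun ⟨t, ht, hts⟩ => hts ▸ ht.preimage hf.continuous⟩
  obtain ⟨U, hUo, rfl⟩ := isGδ_iff_eq_iInter_nat.mp hs
  choose V hVo hVU using fun n => hf.isOpen_iff.mp (hUo n)
  exact ⟨⋂ n, V n, .iInter_of_isOpen hVo, by simp only [preimage_iInter, hVU]⟩

lemma IsGδ.of_preimage_of_surjective [CompactSpace X] [T2Space Y] {q : X → Y}
    (hq : Continuous q) (hqs : Function.Surjective q) {s : Set Y} (hs : IsGδ (q ⁻¹' s)) :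
    IsGδ s := by
  obtain ⟨U, hUo, hU⟩ := isGδ_iff_eq_iInter_nat.mp hs
  have : s = ⋂ n, (q '' (U n)ᶜ)ᶜ := by
    rw [← compl_iUnion, ← image_iUnion, ← compl_iInter, ← hU, ← preimage_compl,
      hqs.image_preimage, compl_compl]
  exact this ▸ .iInter_of_isOpen fun n => (hq.isClosedMap _ (hUo n).isClosed_compl).isOpen_compl

lemma preimage_range_eq_range_of_comp_eq [T2Space Y] {i : X → Y} {f : X → Z} {p : Y → Z}
    (hi : IsDenseInducing i) (hf : IsInducing f) (hp : Continuous p) (hpi : p ∘ i = f) :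
    p ⁻¹' range f = range i := by
  refine Subset.antisymm (fun z ⟨x, hx⟩ => ⟨x, ?_⟩)
    (range_subset_iff.mpr fun x => ⟨x, by simp [← hpi]⟩)
  have := hi.comap_nhds_neBot z
  have hfx : Tendsto f (comap i (𝓝 z)) (𝓝 (f x)) := by
    rw [hx, ← hpi]
    exact (hp.tendsto z).comp tendsto_comap
  have hid : Tendsto id (comap i (𝓝 z)) (𝓝 x) := hf.tendsto_nhds_iff.mpr hfx
  exact tendsto_nhds_unique ((hi.continuous.tendsto x).comp hid) tendsto_comap

lemma denseRange_codRestrict_closure_range {α : Type*} (f : α → Y) :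
    DenseRange (codRestrict f (closure (range f)) fun x => subset_closure (mem_range_self x)) := by
  rw [DenseRange, Subtype.dense_iff, ← range_comp]
  exact subset_rfl

lemma Continuous.surjective_of_denseRange [CompactSpace X] [T2Space Y] {f : X → Y}
    (hf : Continuous f) (hfd : DenseRange f) : Function.Surjective f := by
  rw [← range_eq_univ, ← (isCompact_range hf).isClosed.closure_eq, hfd.closure_eq]

end General

section CechComplete

variable {X : Type u} [TopologicalSpace X]

lemma cechComplete_of_isEmbedding {K : Type u} [TopologicalSpace K] [CompactSpace K] [T2Space K]
    {e : X → K} (he : IsEmbedding e) (hGδ : IsGδ (range e)) : CechComplete X := by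
  have hC : ∀ x, e x ∈ closure (range e) := fun x => subset_closure (mem_range_self x)
  refine ⟨closure (range e), inferInstance,
    isCompact_iff_compactSpace.mp isClosed_closure.isCompact, inferInstance,
    codRestrict e _ hC, he.codRestrict _ hC, denseRange_codRestrict_closure_range e, ?_⟩
  rw [range_codRestrict]
  exact hGδ.preimage continuous_subtype_val

lemma CechComplete.of_compactSpace [CompactSpace X] [T2Space X] : CechComplete X :=
  cechComplete_of_isEmbedding .id (range_id ▸ .univ)

lemma CechComplete.of_isOpen (h : CechComplete X) {s : Set X} (hs : IsOpen s) :
    CechComplete s := by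
  obtain ⟨K, _, _, _, e, he, -, hGδ⟩ := h
  obtain ⟨O, hO, rfl⟩ := he.isOpen_iff.mp hs
  refine cechComplete_of_isEmbedding (he.comp .subtypeVal) ?_
  rw [range_comp, Subtype.range_coe, image_preimage_eq_inter_range]
  exact hO.isGδ.inter hGδ

variable [T35Space X]

lemma CechComplete.isGδ_range (h : CechComplete X) {K : Type v} [TopologicalSpace K]
    [CompactSpace K] [T2Space K] {g : X → K} (hg : IsEmbedding g) (hgd : DenseRange g) :
    IsGδ (range g) := by
  have hβ := isDenseEmbedding_stoneCechUnit (X := X).isDenseInducing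
  obtain ⟨L, _, _, _, f, hf, -, hGδ⟩ := h
  have hp := continuous_stoneCechExtend hf.continuous
  have hq := continuous_stoneCechExtend hg.continuous
  refine .of_preimage_of_surjective hq (hq.surjective_of_denseRange ?_) ?_
  · refine hgd.mono ?_
    simpa only [stoneCechExtend_extends] using range_comp_subset_range stoneCechUnit
      (stoneCechExtend hg.continuous)
  · rw [preimage_range_eq_range_of_comp_eq hβ hg.isInducing hq (stoneCechExtend_extends _),
      ← preimage_range_eq_range_of_comp_eq hβ hf.isInducing hp (stoneCechExtend_extends _)]
    exact hGδ.preimage hp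

lemma CechComplete.exists_isGδ_closure_inter (h : CechComplete X) {K : Type v}
    [TopologicalSpace K] [CompactSpace K] [T2Space K] {g : X → K} (hg : IsEmbedding g) :
    ∃ G, IsGδ G ∧ closure (range g) ∩ G = range g := by
  have hC : ∀ x, g x ∈ closure (range g) := fun x => subset_closure (mem_range_self x)
  have := isCompact_iff_compactSpace.mp (isClosed_closure (s := range g)).isCompact
  obtain ⟨G, hG, hGeq⟩ := IsInducing.subtypeVal.isGδ_iff.mp
    (h.isGδ_range (hg.codRestrict _ hC) (denseRange_codRestrict_closure_range g))
  refine ⟨G, hG, ?_⟩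
  rw [range_codRestrict] at hGeq
  rw [inter_comm, ← Subtype.range_coe (s := closure (range g)), ← image_preimage_eq_inter_range,
    hGeq, image_preimage_eq_inter_range, Subtype.range_coe]
  exact inter_eq_left.mpr subset_closure

lemma IsOpen.isGδ_image_of_cechComplete {K : Type v} [TopologicalSpace K] [CompactSpace K]
    [T2Space K] {i : X → K} (hi : IsEmbedding i) (hid : DenseRange i) {s : Set X}
    (hs : IsOpen s) (h : CechComplete s) : IsGδ (i '' s) := by
  obtain ⟨G, hG, hGeq⟩ := h.exists_isGδ_closure_inter (hi.comp .subtypeVal)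
  rw [range_comp, Subtype.range_coe] at hGeq
  obtain ⟨O, hO, rfl⟩ := hi.isOpen_iff.mp hs
  have hOC : O ⊆ closure (i '' (i ⁻¹' O)) := hid.subset_closure_image_preimage_of_isOpen hO
  have : i '' (i ⁻¹' O) = O ∩ G :=
    Subset.antisymm (subset_inter (image_preimage_subset _ _) (hGeq ▸ inter_subset_right))
      fun b ⟨hbO, hbG⟩ => hGeq ▸ ⟨hOC hbO, hbG⟩
  exact this ▸ hO.isGδ.inter hG

lemma cechComplete_of_union_eq_univ {s t : Set X} (hs : IsOpen s) (ht : IsOpen t)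
    (hst : s ∪ t = univ) (hsc : CechComplete s) (htc : CechComplete t) : CechComplete X := by
  have hi := isEmbedding_stoneCechUnit (X := X)
  refine cechComplete_of_isEmbedding hi ?_
  rw [← image_univ, ← hst, image_union]
  exact (hs.isGδ_image_of_cechComplete hi denseRange_stoneCechUnit hsc).union
    (ht.isGδ_image_of_cechComplete hi denseRange_stoneCechUnit htc)

end CechComplete

theorem cechComplete_reconstructible_general (X : Type u) [TopologicalSpace X] [T35Space X] :
    CechComplete X ↔ ∀ x : X, CechComplete ({x}ᶜ : Set X) := by
  refine ⟨fun h x => h.of_isOpen isOpen_compl_singleton, fun h => ?_⟩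
  rcases subsingleton_or_nontrivial X with _ | _
  · have := Finite.of_subsingleton (α := X)
    exact .of_compactSpace
  · obtain ⟨x, y, hxy⟩ := exists_pair_ne X
    refine cechComplete_of_union_eq_univ isOpen_compl_singleton isOpen_compl_singleton ?_
      (h x) (h y)
    rw [← compl_inter, (singleton_inter_eq_empty (s := {y})).mpr hxy, compl_empty]

theorem cechComplete_reconstructible (X : Type u) [TopologicalSpace X] [T35Space X]
    (hcard : 3 ≤ Cardinal.mk X) :
    CechComplete X ↔ ∀ x : X, CechComplete ({x}ᶜ : Set X) :=
  cechComplete_reconstructible_general X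
end

section
/- Let X be a topological space with at least 3 points. Then X is metrizable if and only if for every x ∈ X the subspace X \ {x} is metrizable. -/
/-!
Metrizability is hereditary, so only the converse needs work. Three points make `X` Hausdorff:
two points `x ≠ y` are separated inside the card at a third point `z`, and that card is open in `X`
because `X` is T₁, which is seen in the same way.

Now fix `x ≠ y`. In the metrizable card `X ∖ {y}`, the distance to `x` capped at a small `δ` extends
by `δ` near `y` to a continuous height `g : X → ℝ` that vanishes only at `x` and whose sublevel sets
form a neighbourhood basis at `x`. The metric `d` of the card `X ∖ {x}` then extends to the cone
metric `D p q = min (d p q + |g p - g q|) (g p + g q)`, with `D x q = g q`, which induces the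
topology of `X`.
-/

open TopologicalSpace Set Filter Topology

section Separation

variable {X : Type*} [TopologicalSpace X]

theorem t1Space_of_forall_t1Space_compl_singleton (hX : 3 ≤ Cardinal.mk X)
    (h : ∀ z : X, T1Space ({z}ᶜ : Set X)) : T1Space X := by
  refine t1Space_iff_specializes_imp_eq.2 fun x y hxy => by_contra fun hne => ?_
  obtain ⟨z, hzx, hzy⟩ := Cardinal.exists_ne_ne_of_three_le hX x y
  have := h z
  have hxy' : (⟨x, hzx.symm⟩ : ({z}ᶜ : Set X)) ⤳ ⟨y, hzy.symm⟩ :=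
    IsInducing.subtypeVal.specializes_iff.1 hxy
  exact hne (congrArg Subtype.val hxy'.eq)

theorem t2Space_of_forall_t2Space_compl_singleton (hX : 3 ≤ Cardinal.mk X)
    (h : ∀ z : X, T2Space ({z}ᶜ : Set X)) : T2Space X := by
  have := t1Space_of_forall_t1Space_compl_singleton hX fun z => have := h z; inferInstance
  refine t2Space_iff_disjoint_nhds.2 fun x y hxy => ?_
  obtain ⟨z, hzx, hzy⟩ := Cardinal.exists_ne_ne_of_three_le hX x y
  have := h z
  have hz : IsOpenEmbedding (Subtype.val : ({z}ᶜ : Set X) → X) :=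
    isOpen_compl_singleton.isOpenEmbedding_subtypeVal
  rw [← hz.map_nhds_eq ⟨x, hzx.symm⟩, ← hz.map_nhds_eq ⟨y, hzy.symm⟩, disjoint_map hz.injective,
    disjoint_nhds_nhds]
  exact fun heq => hxy (congrArg Subtype.val heq)

end Separation

section ConeDist

variable {α β : Type*} [PseudoMetricSpace α] (f : β → α) (g : β → ℝ)

/-- The metric of the cone over `f` with height `g ≥ 0`, whose apex is the zero set of `g`:
the second branch is the path through the apex. -/
def coneDist (p q : β) : ℝ :=
  min (dist (f p) (f q) + |g p - g q|) (g p + g q)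

variable {f g}

theorem coneDist_self {p : β} (hp : 0 ≤ g p) : coneDist f g p p = 0 := by
  simp [coneDist, hp]

theorem coneDist_nonneg {p q : β} (hp : 0 ≤ g p) (hq : 0 ≤ g q) : 0 ≤ coneDist f g p q :=
  le_min (add_nonneg dist_nonneg (abs_nonneg _)) (add_nonneg hp hq)

theorem coneDist_comm (p q : β) : coneDist f g p q = coneDist f g q p := by
  rw [coneDist, coneDist, dist_comm, abs_sub_comm, add_comm (g p)]

theorem coneDist_triangle (p : β) {q : β} (r : β) (hq : 0 ≤ g q) :
    coneDist f g p r ≤ coneDist f g p q + coneDist f g q r := by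
  have := dist_triangle (f p) (f q) (f r)
  have := abs_sub_le (g p) (g q) (g r)
  have := le_abs_self (g p - g q)
  have := neg_le_abs (g q - g r)
  have := dist_nonneg (x := f p) (y := f q)
  have := dist_nonneg (x := f q) (y := f r)
  unfold coneDist
  rcases min_choice (dist (f p) (f q) + |g p - g q|) (g p + g q) with h₁ | h₁ <;>
    rcases min_choice (dist (f q) (f r) + |g q - g r|) (g q + g r) with h₂ | h₂ <;>
    rw [h₁, h₂] <;>
    first
    | exact (min_le_left _ _).trans (by linarith)
    | exact (min_le_right _ _).trans (by linarith)

theorem coneDist_of_eq_zero {p q : β} (hp : g p = 0) (hq : 0 ≤ g q) :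
    coneDist f g p q = g q := by
  simp [coneDist, hp, abs_of_nonneg hq]

theorem dist_le_coneDist {p q : β} (hq : 0 ≤ g q) (h : coneDist f g p q < g p) :
    dist (f p) (f q) ≤ coneDist f g p q := by
  have h_branch : dist (f p) (f q) + |g p - g q| < g p :=
    (min_lt_iff.1 h).resolve_right (by linarith)
  rw [coneDist, min_eq_left (by linarith)]
  linarith [abs_nonneg (g p - g q)]

end ConeDist

section Metrization

variable {X : Type*} [TopologicalSpace X]

theorem nhds_hasBasis_lt_of_tendsto {h : X → ℝ} {p : X} (h_tendsto : Tendsto h (𝓝 p) (𝓝 0))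
    (h_small : ∀ N ∈ 𝓝 p, ∃ ε > 0, ∀ q, h q < ε → q ∈ N) :
    (𝓝 p).HasBasis (0 < ·) fun ε => {q | h q < ε} :=
  ⟨fun N => ⟨fun hN => h_small N hN, fun ⟨_, hε, hsub⟩ =>
    mem_of_superset (h_tendsto (Iio_mem_nhds hε)) hsub⟩⟩

theorem pseudoMetrizableSpace_of_nhds_hasBasis (D : X → X → ℝ) (D_self : ∀ p, D p p = 0)
    (D_comm : ∀ p q, D p q = D q p) (D_triangle : ∀ p q r, D p r ≤ D p q + D q r)
    (hD : ∀ p, (𝓝 p).HasBasis (0 < ·) fun ε => {q | D p q < ε}) :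
    PseudoMetrizableSpace X :=
  letI := PseudoMetricSpace.ofDistTopology D D_self D_comm D_triangle fun s =>
    isOpen_iff_mem_nhds.trans <| forall₂_congr fun p _ =>
      (hD p).mem_iff.trans <| by simp [subset_def]
  inferInstance

theorem pseudoMetrizableSpace_of_isInducing_restrict {α : Type*} [PseudoMetricSpace α] {x : X}
    {f : X → α} (hf : IsInducing (({x}ᶜ : Set X).domRestrict f)) {g : X → ℝ} (hg : Continuous g)
    (hgx : g x = 0) (hg_pos : ∀ p ≠ x, 0 < g p)
    (hbasis : (𝓝 x).HasBasis (0 < ·) fun ε => {p | g p < ε}) :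
    PseudoMetrizableSpace X := by
  have hg_nonneg : ∀ p, 0 ≤ g p := fun p => by
    rcases eq_or_ne p x with rfl | hp
    exacts [hgx.ge, (hg_pos p hp).le]
  have hU : IsOpen ({x}ᶜ : Set X) := by
    convert isOpen_lt continuous_const hg
    ext p
    exact ⟨hg_pos p, fun (hp : 0 < g p) h => hp.ne' (by rw [mem_singleton_iff.1 h, hgx])⟩
  refine pseudoMetrizableSpace_of_nhds_hasBasis (coneDist f g)
    (fun p => coneDist_self (hg_nonneg p)) coneDist_comm
    (fun p q r => coneDist_triangle p r (hg_nonneg q)) fun p => ?_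
  rcases eq_or_ne p x with rfl | hp
  · simpa only [coneDist_of_eq_zero hgx (hg_nonneg _)] using hbasis
  refine nhds_hasBasis_lt_of_tendsto ?_ fun N hN => ?_
  · have hf_cont : ContinuousAt f p :=
      (continuousOn_iff_continuous_domRestrict.2 hf.continuous).continuousAt (hU.mem_nhds hp)
    have h_lim : Tendsto (fun q => dist (f p) (f q) + |g p - g q|) (𝓝 p)
        (𝓝 (dist (f p) (f p) + |g p - g p|)) :=
      (tendsto_const_nhds.dist hf_cont).add (tendsto_const_nhds.sub hg.continuousAt).abs
    refine squeeze_zero (fun q => coneDist_nonneg (hg_nonneg p) (hg_nonneg q))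
      (fun q => min_le_left _ _) ?_
    simpa using h_lim
  have hN' : Subtype.val ⁻¹' N ∈ 𝓝 (⟨p, hp⟩ : ({x}ᶜ : Set X)) :=
    continuous_subtype_val.continuousAt.preimage_mem_nhds hN
  rw [hf.nhds_eq_comap] at hN'
  obtain ⟨r, hr, hball⟩ := (Metric.nhds_basis_ball.comap _).mem_iff.1 hN'
  refine ⟨min r (g p), lt_min hr (hg_pos p hp), fun q hq => ?_⟩
  have hq_lt : coneDist f g p q < g p := hq.trans_le (min_le_right _ _)
  have hqx : q ≠ x := by
    rintro rfl
    rw [coneDist_comm, coneDist_of_eq_zero hgx (hg_nonneg p)] at hq_lt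
    exact lt_irrefl _ hq_lt
  exact hball (a := ⟨q, hqx⟩) <| Metric.mem_ball'.2 <|
    (dist_le_coneDist (hg_nonneg q) hq_lt).trans_lt (hq.trans_le (min_le_left _ _))

theorem pseudoMetrizableSpace_of_compl_singleton {x : X} [PseudoMetrizableSpace ({x}ᶜ : Set X)]
    [Nonempty ({x}ᶜ : Set X)] {g : X → ℝ} (hg : Continuous g) (hgx : g x = 0)
    (hg_pos : ∀ p ≠ x, 0 < g p)
    (hbasis : (𝓝 x).HasBasis (0 < ·) fun ε => {p | g p < ε}) :
    PseudoMetrizableSpace X := by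
  classical
  let := pseudoMetrizableSpacePseudoMetric ({x}ᶜ : Set X)
  let r : X → ({x}ᶜ : Set X) := fun p => if hp : p = x then Classical.arbitrary _ else ⟨p, hp⟩
  have hr : ({x}ᶜ : Set X).domRestrict r = id := funext fun v => dif_neg v.2
  exact pseudoMetrizableSpace_of_isInducing_restrict (hr ▸ IsInducing.id) hg hgx hg_pos hbasis

theorem exists_continuous_nhds_hasBasis_lt [T2Space X] {x y : X} (hxy : x ≠ y)
    [MetrizableSpace ({y}ᶜ : Set X)] :
    ∃ g : X → ℝ, Continuous g ∧ g x = 0 ∧ (∀ p ≠ x, 0 < g p) ∧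
      (𝓝 x).HasBasis (0 < ·) fun ε => {p | g p < ε} := by
  classical
  let := metrizableSpaceMetric ({y}ᶜ : Set X)
  set x' : ({y}ᶜ : Set X) := ⟨x, hxy⟩
  obtain ⟨A, B, hA, hB, hxA, hyB, hAB⟩ := t2_separation hxy
  obtain ⟨δ, hδ, hδA⟩ := Metric.isOpen_iff.1 (hA.preimage continuous_subtype_val) x' hxA
  -- the distance to `x`, capped at `δ` so that it is constant on `B`
  let g : X → ℝ := fun p => if hp : p = y then δ else min δ (dist (⟨p, hp⟩ : ({y}ᶜ : Set X)) x')
  have hg_compl : ∀ v : ({y}ᶜ : Set X), g v = min δ (dist v x') := fun v => dif_neg v.2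
  have hg_B : ∀ p ∈ B, g p = δ := by
    intro p hp
    rcases eq_or_ne p y with rfl | hpy
    · exact dif_pos rfl
    · rw [hg_compl ⟨p, hpy⟩, min_eq_left]
      exact not_lt.1 fun h => disjoint_left.1 hAB (hδA h) hp
  have hg : Continuous g := by
    refine continuous_iff_continuousAt.2 fun p => ?_
    rcases eq_or_ne p y with rfl | hpy
    · exact continuousAt_const.congr
        (eventually_of_mem (hB.mem_nhds hyB) fun q hq => (hg_B q hq).symm)
    · have : ContinuousOn g {y}ᶜ := continuousOn_iff_continuous_domRestrict.2 <|
        (continuous_const.min (continuous_id.dist continuous_const)).congr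
          fun v => (hg_compl v).symm
      exact this.continuousAt (isOpen_compl_singleton.mem_nhds hpy)
  have hgx : g x = 0 := (hg_compl x').trans (by simp [hδ.le])
  refine ⟨g, hg, hgx, fun p hpx => ?_, nhds_hasBasis_lt_of_tendsto (hgx ▸ hg.tendsto x) ?_⟩
  · rcases eq_or_ne p y with rfl | hpy
    · rwa [hg_B p hyB]
    · rw [hg_compl ⟨p, hpy⟩]
      exact lt_min hδ (dist_pos.2 fun h => hpx (congrArg Subtype.val h))
  intro N hN
  obtain ⟨r, hr, hball⟩ :=
    Metric.mem_nhds_iff.1 (continuous_subtype_val.continuousAt.preimage_mem_nhds (x := x') hN)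
  refine ⟨min r δ, lt_min hr hδ, fun q hq => ?_⟩
  obtain ⟨hq_r, hq_δ⟩ := lt_min_iff.1 hq
  have hqy : q ≠ y := by
    rintro rfl
    exact hq_δ.ne (hg_B q hyB)
  rw [hg_compl ⟨q, hqy⟩] at hq_r hq_δ
  rw [min_eq_right ((min_lt_iff.1 hq_δ).resolve_left (lt_irrefl δ)).le] at hq_r
  exact hball (a := ⟨q, hqy⟩) hq_r

end Metrization

theorem metrizable_reconstructible (X : Type*) [TopologicalSpace X]
    (hcard : 3 ≤ Cardinal.mk X) :
    TopologicalSpace.MetrizableSpace X ↔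
      ∀ x : X, TopologicalSpace.MetrizableSpace ({x}ᶜ : Set X) := by
  refine ⟨fun _ x => inferInstance, fun h => ?_⟩
  have : T2Space X :=
    t2Space_of_forall_t2Space_compl_singleton hcard fun z => have := h z; inferInstance
  have : Nontrivial X := Cardinal.one_lt_iff_nontrivial.1 (lt_of_lt_of_le (by norm_num) hcard)
  obtain ⟨x, y, hxy⟩ := exists_pair_ne X
  have := h y
  obtain ⟨g, hg, hgx, hg_pos, hbasis⟩ := exists_continuous_nhds_hasBasis_lt hxy
  have := h x
  have : Nonempty ({x}ᶜ : Set X) := ⟨⟨y, hxy.symm⟩⟩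
  have : PseudoMetrizableSpace X := pseudoMetrizableSpace_of_compl_singleton hg hgx hg_pos hbasis
  infer_instance
end

section
/- Let X be a topological space with at least 3 points. Then X is completely metrizable if and only if for every x ∈ X the subspace X \ {x} is completely metrizable. -/
/-- A topological space is completely metrizable if its topology is induced by a
complete metric. -/
def IsCompletelyMetrizable (X : Type u) [t : TopologicalSpace X] : Prop :=
  ∃ m : MetricSpace X, m.toUniformSpace.toTopologicalSpace = t ∧
    @CompleteSpace X m.toUniformSpace

/-!
Cards of a completely metrizable space are open subspaces, hence completely metrizable.

Conversely, any two points lie in a common card, so `X` is T₁ and then Hausdorff. Fix `a ≠ b`.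
The distance to `a` for a metric on `X \ {b}`, truncated at a radius `ε` whose ball avoids a
neighbourhood of `b`, extends by `ε` to a continuous `f ≥ 0` on `X` vanishing exactly at `a`, whose
sublevel sets form a neighbourhood basis of `a`. With a complete metric `d` on `X \ {a}`,
`D x y = min (max (d x y) |f x - f y|) (f x + f y)` is a complete metric for `X`; `D x a = f x`
whatever `d`-coordinate `a` is given. A `D`-Cauchy sequence either has `f → 0` along it and
converges to `a`, or keeps `f` bounded below, where `D` agrees with `max d |Δf|` at small scales.
-/

open Set Filter Topology TopologicalSpace Function Cardinal

theorem isCompletelyMetrizable_iff_isCompletelyMetrizableSpace {X : Type*}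
    [TopologicalSpace X] :
    IsCompletelyMetrizable X ↔ IsCompletelyMetrizableSpace X :=
  ⟨fun h => ⟨h⟩, fun h => h.complete⟩

theorem IsOpen.isCompletelyMetrizableSpace {X : Type*} [TopologicalSpace X]
    [IsCompletelyMetrizableSpace X] {s : Set X} (hs : IsOpen s) :
    IsCompletelyMetrizableSpace s :=
  letI := upgradeIsCompletelyMetrizable X
  inferInstanceAs (IsCompletelyMetrizableSpace (Opens.CompleteCopy ⟨s, hs⟩))

section Pinch

variable {α M : Type*} [PseudoMetricSpace M] (g : α → M) (f : α → ℝ)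

/-- `max (dist (g x) (g y)) |f x - f y|` with the zero set of `f` pinched to a point. For `f ≥ 0`
this is a pseudometric, because `f` is 1-Lipschitz for the unpinched distance. -/
def pinchDist (x y : α) : ℝ := min (dist (g x, f x) (g y, f y)) (f x + f y)

variable {g f}

theorem pinchDist_comm (x y : α) : pinchDist g f x y = pinchDist g f y x := by
  rw [pinchDist, pinchDist, dist_comm, add_comm]

theorem pinchDist_self (hf : ∀ x, 0 ≤ f x) (x : α) : pinchDist g f x x = 0 :=
  le_antisymm ((min_le_left _ _).trans_eq (dist_self _))
    (le_min dist_nonneg (add_nonneg (hf x) (hf x)))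

theorem pinchDist_le_dist (x y : α) : pinchDist g f x y ≤ dist (g x, f x) (g y, f y) :=
  min_le_left _ _

theorem abs_sub_le_dist_prod (x y : α) : |f x - f y| ≤ dist (g x, f x) (g y, f y) := by
  rw [← Real.dist_eq]; exact le_max_right _ _

theorem pinchDist_triangle (hf : ∀ x, 0 ≤ f x) (x y z : α) :
    pinchDist g f x z ≤ pinchDist g f x y + pinchDist g f y z := by
  have hxy := abs_le.1 (abs_sub_le_dist_prod (g := g) (f := f) x y)
  have hyz := abs_le.1 (abs_sub_le_dist_prod (g := g) (f := f) y z)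
  have hxz := dist_triangle (g x, f x) (g y, f y) (g z, f z)
  have h₁ := min_le_left (dist (g x, f x) (g z, f z)) (f x + f z)
  have h₂ := min_le_right (dist (g x, f x) (g z, f z)) (f x + f z)
  unfold pinchDist
  rcases min_choice (dist (g x, f x) (g y, f y)) (f x + f y) with h | h <;>
    rcases min_choice (dist (g y, f y) (g z, f z)) (f y + f z) with h' | h' <;>
    rw [h, h'] <;> linarith [hf y]

theorem pinchDist_eq_of_eq_zero (hf : ∀ x, 0 ≤ f x) {x y : α} (hy : f y = 0) :
    pinchDist g f x y = f x := by
  have := abs_sub_le_dist_prod (g := g) (f := f) x y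
  rw [hy, sub_zero, abs_of_nonneg (hf x)] at this
  rw [pinchDist, hy, add_zero, min_eq_right this]

theorem pinchDist_lt_iff (hf : ∀ x, 0 ≤ f x) {x y : α} {ε : ℝ} (hε : ε ≤ f x) :
    pinchDist g f x y < ε ↔ dist (g x, f x) (g y, f y) < ε := by
  rw [pinchDist, min_lt_iff, or_iff_left (hε.trans (le_add_of_nonneg_right (hf y))).not_gt]

theorem eq_of_pinchDist_eq_zero {M : Type*} [MetricSpace M] {g : α → M} (hf : ∀ x, 0 ≤ f x)
    (hinj : InjOn g {x | f x ≠ 0}) (hzero : ∀ x y, f x = 0 → f y = 0 → x = y) {x y : α}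
    (h : pinchDist g f x y = 0) : x = y := by
  rcases min_choice (dist (g x, f x) (g y, f y)) (f x + f y) with h' | h' <;>
    rw [pinchDist, h'] at h
  · obtain ⟨hg, hfxy⟩ : g x = g y ∧ f x = f y := Prod.ext_iff.1 (dist_eq_zero.1 h)
    by_cases hx : f x = 0
    · exact hzero x y hx (hfxy ▸ hx)
    · exact hinj hx (show f y ≠ 0 from hfxy ▸ hx) hg
  · exact hzero x y (by linarith [hf x, hf y]) (by linarith [hf x, hf y])

end Pinch

section Extension

variable {X U : Type*} [TopologicalSpace X] [MetricSpace U] [Nonempty U] {e : U → X} {a : X}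
  {f : X → ℝ}

theorem nhds_eq_comap_invFun_prod (he : IsOpenEmbedding e) (hrange : range e = {x | f x ≠ 0})
    (hf : Continuous f) {x : X} (hx : f x ≠ 0) :
    𝓝 x = comap (fun y => (invFun e y, f y)) (𝓝 (invFun e x, f x)) := by
  obtain ⟨u, rfl⟩ : x ∈ range e := hrange ▸ hx
  have hgraph : (fun y => (invFun e y, f y)) ∘ e = fun v => (v, (f ∘ e) v) := by
    funext v; simp [leftInverse_invFun he.injective v]
  have hsupp : comap (fun y => (invFun e y, f y)) (𝓝 (u, f (e u))) ≤ 𝓟 (range e) :=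
    le_principal_iff.2 <| mem_comap.2 ⟨{p | p.2 ≠ 0},
      (isOpen_ne_fun continuous_snd continuous_const).mem_nhds hx, fun y hy => hrange ▸ hy⟩
  rw [leftInverse_invFun he.injective u, ← he.map_nhds_eq,
    (isEmbedding_graph (hf.comp he.continuous)).nhds_eq_comap, ← hgraph,
    ← comap_comap, map_comap]
  exact inf_eq_left.2 hsupp

theorem hasBasis_nhds_pinchDist (he : IsOpenEmbedding e) (hrange : range e = {x | f x ≠ 0})
    (hf : Continuous f) (hf0 : ∀ x, 0 ≤ f x) (hfa : ∀ x, f x = 0 ↔ x = a)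
    (hbasis : (𝓝 a).HasBasis (0 < ·) (fun ε => f ⁻¹' Iio ε)) (x : X) :
    (𝓝 x).HasBasis (0 < ·) (fun ε => {y | pinchDist (invFun e) f x y < ε}) := by
  by_cases hx : f x = 0
  · obtain rfl := (hfa x).1 hx
    simp only [pinchDist_comm x, pinchDist_eq_of_eq_zero hf0 hx]
    exact hbasis
  have hx₀ : 0 < f x := (hf0 x).lt_of_ne' hx
  rw [nhds_eq_comap_invFun_prod he hrange hf hx]
  refine (Metric.nhds_basis_ball.comap _).to_hasBasis (fun ε hε => ?_) (fun ε hε => ?_)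
  · refine ⟨min ε (f x), lt_min hε hx₀, fun y hy => ?_⟩
    have := (pinchDist_lt_iff hf0 (min_le_right ε (f x))).1 hy
    rw [mem_preimage, Metric.mem_ball, dist_comm]
    exact this.trans_le (min_le_left _ _)
  · exact ⟨ε, hε, fun y hy => (pinchDist_le_dist x y).trans_lt <| by
      rw [mem_preimage, Metric.mem_ball, dist_comm] at hy; exact hy⟩

theorem exists_tendsto_of_pinchDist_cauchy [CompleteSpace U] (he : IsOpenEmbedding e)
    (hrange : range e = {x | f x ≠ 0}) (hf0 : ∀ x, 0 ≤ f x) (hfa : f a = 0)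
    (hbasis : (𝓝 a).HasBasis (0 < ·) (fun ε => f ⁻¹' Iio ε)) {u : ℕ → X}
    (hu : ∀ ε > 0, ∃ N, ∀ m ≥ N, ∀ n ≥ N, pinchDist (invFun e) f (u m) (u n) < ε) :
    ∃ x, Tendsto u atTop (𝓝 x) := by
  by_cases hsmall : ∀ c > 0, ∃ᶠ n in atTop, f (u n) < c
  · refine ⟨a, hbasis.tendsto_right_iff.2 fun ε hε => ?_⟩
    obtain ⟨N, hN⟩ := hu (ε / 2) (half_pos hε)
    obtain ⟨m, hm, hmN⟩ :=
      ((hsmall (ε / 2) (half_pos hε)).and_eventually (eventually_ge_atTop N)).exists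
    filter_upwards [eventually_ge_atTop N] with n hn
    calc f (u n) = pinchDist (invFun e) f (u n) a := (pinchDist_eq_of_eq_zero hf0 hfa).symm
      _ ≤ pinchDist (invFun e) f (u n) (u m) + pinchDist (invFun e) f (u m) a :=
        pinchDist_triangle hf0 _ _ _
      _ < ε / 2 + ε / 2 := by
        rw [pinchDist_eq_of_eq_zero hf0 hfa]; exact add_lt_add (hN n hn m hmN) hm
      _ = ε := add_halves ε
  push Not at hsmall
  obtain ⟨c, hc, hev⟩ := hsmall
  obtain ⟨N₀, hN₀⟩ := eventually_atTop.1 hev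
  have hcauchy : CauchySeq (invFun e ∘ u) := Metric.cauchySeq_iff.2 fun ε hε => by
    obtain ⟨N, hN⟩ := hu (min ε c) (lt_min hε hc)
    refine ⟨max N N₀, fun m hm n hn => ?_⟩
    have hc_le : min ε c ≤ f (u m) := (min_le_right ε c).trans (hN₀ m (le_of_max_le_right hm))
    have hdist := (pinchDist_lt_iff hf0 hc_le).1
      (hN m (le_of_max_le_left hm) n (le_of_max_le_left hn))
    rw [Prod.dist_eq] at hdist
    exact (le_max_left _ _).trans_lt (hdist.trans_le (min_le_left _ _))
  obtain ⟨v, hv⟩ := cauchySeq_tendsto_of_complete hcauchy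
  refine ⟨e v, ((he.continuous.tendsto v).comp hv).congr' ?_⟩
  filter_upwards [hev] with n hn
  exact invFun_eq (show u n ∈ range e from hrange ▸ (hc.trans_le hn).ne')

theorem isCompletelyMetrizableSpace_of_isOpenEmbedding [CompleteSpace U]
    (he : IsOpenEmbedding e) (hrange : range e = {x | f x ≠ 0}) (hf : Continuous f)
    (hf0 : ∀ x, 0 ≤ f x) (hfa : ∀ x, f x = 0 ↔ x = a)
    (hbasis : (𝓝 a).HasBasis (0 < ·) (fun ε => f ⁻¹' Iio ε)) : IsCompletelyMetrizableSpace X := by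
  have hinj : InjOn (invFun e) {x | f x ≠ 0} :=
    LeftInvOn.injOn fun x hx => invFun_eq (show x ∈ range e from hrange ▸ hx)
  let : MetricSpace X := MetricSpace.ofDistTopology (pinchDist (invFun e) f)
    (pinchDist_self hf0) pinchDist_comm (pinchDist_triangle hf0)
    (fun s => by
      simp only [isOpen_iff_mem_nhds, subset_def, mem_ofPred_eq,
        (hasBasis_nhds_pinchDist he hrange hf hf0 hfa hbasis _).mem_iff])
    (fun x y => eq_of_pinchDist_eq_zero hf0 hinj fun x y hx hy =>
      ((hfa x).1 hx).trans ((hfa y).1 hy).symm)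
  have : CompleteSpace X := Metric.complete_of_cauchySeq_tendsto fun u hu =>
    exists_tendsto_of_pinchDist_cauchy he hrange hf0 ((hfa a).2 rfl) hbasis
      (Metric.cauchySeq_iff.1 hu)
  infer_instance

end Extension

section Separation

variable {X : Type*} [TopologicalSpace X]

theorem t1Space_of_t1Space_compl_singleton (hX : 3 ≤ #X) (h : ∀ x : X, T1Space ({x}ᶜ : Set X)) :
    T1Space X :=
  t1Space_iff_specializes_imp_eq.2 fun x y hxy => by
    by_contra hne
    obtain ⟨p, hpx, hpy⟩ := exists_ne_ne_of_three_le hX x y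
    have := h p
    have := (IsInducing.subtypeVal.specializes_iff (x := (⟨x, hpx.symm⟩ : ({p}ᶜ : Set X)))
      (y := ⟨y, hpy.symm⟩)).1 hxy
    exact hne (congrArg Subtype.val this.eq)

theorem t2Space_of_t2Space_compl_singleton [T1Space X] (hX : 3 ≤ #X)
    (h : ∀ x : X, T2Space ({x}ᶜ : Set X)) : T2Space X :=
  t2Space_iff_disjoint_nhds.2 fun x y hxy => by
    obtain ⟨p, hpx, hpy⟩ := exists_ne_ne_of_three_le hX x y
    have he := (isOpen_compl_singleton (x := p)).isOpenEmbedding_subtypeVal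
    rw [← he.map_nhds_eq ⟨x, hpx.symm⟩, ← he.map_nhds_eq ⟨y, hpy.symm⟩, disjoint_map he.injective]
    have := h p
    exact disjoint_nhds_nhds.2 fun h => hxy (congrArg Subtype.val h)

end Separation

theorem continuous_of_continuousOn_compl_singleton {X Y : Type*} [TopologicalSpace X]
    [TopologicalSpace Y] [T1Space X] {f : X → Y} {b : X} (hf : ContinuousOn f {b}ᶜ)
    (hb : ∀ᶠ x in 𝓝 b, f x = f b) : Continuous f :=
  continuous_iff_continuousAt.2 fun x => by
    by_cases hxb : x = b
    · subst hxb; exact continuousAt_const.congr (hb.mono fun _ h => h.symm)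
    · exact hf.continuousAt (isOpen_compl_singleton.mem_nhds hxb)

theorem hasBasis_nhds_preimage_Iio {X : Type*} [TopologicalSpace X] {f : X → ℝ} {a : X}
    (hf : ContinuousAt f a) (ha : f a = 0) (h : ∀ s ∈ 𝓝 a, ∃ δ > 0, f ⁻¹' Iio δ ⊆ s) :
    (𝓝 a).HasBasis (0 < ·) (fun δ => f ⁻¹' Iio δ) :=
  ⟨fun s => ⟨h s, fun ⟨_, hδ, hsub⟩ =>
    mem_of_superset (hf.preimage_mem_nhds (Iio_mem_nhds (ha ▸ hδ))) hsub⟩⟩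

theorem exists_continuous_hasBasis_nhds_preimage_Iio {X : Type*} [TopologicalSpace X] [T2Space X]
    {a b : X} (hab : a ≠ b) [MetrizableSpace ({b}ᶜ : Set X)] :
    ∃ f : X → ℝ, Continuous f ∧ (∀ x, 0 ≤ f x) ∧ (∀ x, f x = 0 ↔ x = a) ∧
      (𝓝 a).HasBasis (0 < ·) (fun ε => f ⁻¹' Iio ε) := by
  classical
  let := metrizableSpaceMetric ({b}ᶜ : Set X)
  let a' : ({b}ᶜ : Set X) := ⟨a, hab⟩
  obtain ⟨A, B, hA, hB, haA, hbB, hAB⟩ := t2_separation hab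
  obtain ⟨ε, hε, hball⟩ := Metric.isOpen_iff.1 (hA.preimage continuous_subtype_val) a' haA
  let f : X → ℝ := fun x => if h : x = b then ε else min ε (dist (⟨x, h⟩ : ({b}ᶜ : Set X)) a')
  have hf_b : f b = ε := dif_pos rfl
  have hf_compl (u : ({b}ᶜ : Set X)) : f u = min ε (dist u a') :=
    dif_neg (show (u : X) ≠ b from u.2)
  have hfB : EqOn f (fun _ => ε) B := fun x hx => by
    by_cases hxb : x = b
    · exact hxb ▸ hf_b
    · refine (hf_compl ⟨x, hxb⟩).trans (min_eq_left (not_lt.1 fun hlt => ?_))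
      exact hAB.ne_of_mem (hball (Metric.mem_ball.2 hlt)) hx rfl
  have hf_lt {x : X} {δ : ℝ} (hδ : δ ≤ ε) (hx : f x < δ) :
      ∃ h : x ≠ b, dist (⟨x, h⟩ : ({b}ᶜ : Set X)) a' < δ := by
    have hxb : x ≠ b := fun h => (hfB (h ▸ hbB)).not_lt (hx.trans_le hδ)
    rw [hf_compl ⟨x, hxb⟩, min_lt_iff] at hx
    exact ⟨hxb, hx.resolve_left (not_lt.2 hδ)⟩
  have hf : Continuous f := by
    have hcont : Continuous fun u : ({b}ᶜ : Set X) => min ε (dist u a') :=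
      continuous_const.min (continuous_id.dist continuous_const)
    refine continuous_of_continuousOn_compl_singleton (b := b)
      (continuousOn_iff_continuous_domRestrict.2 ?_)
      (eventually_of_mem (hB.mem_nhds hbB) fun x hx => (hfB hx).trans hf_b.symm)
    convert hcont using 1
    exact funext hf_compl
  have hfa (x : X) : f x = 0 ↔ x = a := by
    refine ⟨fun hx => ?_, ?_⟩
    · obtain ⟨hxb, hd⟩ := hf_lt le_rfl (hx.trans_lt hε)
      rw [hf_compl ⟨x, hxb⟩, min_eq_right hd.le, dist_eq_zero] at hx
      exact congrArg Subtype.val hx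
    · rintro rfl
      exact (hf_compl a').trans (by rw [dist_self, min_eq_right hε.le])
  refine ⟨f, hf, fun x => ?_, hfa, hasBasis_nhds_preimage_Iio hf.continuousAt ((hfa a).2 rfl)
    fun s hs => ?_⟩
  · by_cases hxb : x = b
    · exact hxb ▸ hf_b ▸ hε.le
    · exact (hf_compl ⟨x, hxb⟩) ▸ le_min hε.le dist_nonneg
  · obtain ⟨δ, hδ, hsub⟩ := Metric.mem_nhds_iff.1 (continuous_subtype_val.continuousAt (x := a') hs)
    refine ⟨min δ ε, lt_min hδ hε, fun x hx => ?_⟩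
    obtain ⟨hxb, hd⟩ := hf_lt (min_le_right δ ε) hx
    exact hsub (Metric.mem_ball.2 (hd.trans_le (min_le_left δ ε)))

theorem isCompletelyMetrizableSpace_of_compl_singleton {X : Type*} [TopologicalSpace X]
    [T2Space X] {a b : X} (hab : a ≠ b) [IsCompletelyMetrizableSpace ({a}ᶜ : Set X)]
    [IsCompletelyMetrizableSpace ({b}ᶜ : Set X)] : IsCompletelyMetrizableSpace X := by
  obtain ⟨f, hf, hf0, hfa, hbasis⟩ := exists_continuous_hasBasis_nhds_preimage_Iio hab
  let := upgradeIsCompletelyMetrizable ({a}ᶜ : Set X)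
  have : Nonempty ({a}ᶜ : Set X) := ⟨⟨b, hab.symm⟩⟩
  have he : IsOpenEmbedding ((↑) : ({a}ᶜ : Set X) → X) :=
    isOpen_compl_singleton.isOpenEmbedding_subtypeVal
  refine isCompletelyMetrizableSpace_of_isOpenEmbedding he ?_ hf hf0 hfa hbasis
  ext x
  simp [hfa]

theorem completelyMetrizable_reconstructible (X : Type u) [TopologicalSpace X]
    (hcard : 3 ≤ Cardinal.mk X) :
    IsCompletelyMetrizable X ↔ ∀ x : X, IsCompletelyMetrizable ({x}ᶜ : Set X) := by
  simp only [isCompletelyMetrizable_iff_isCompletelyMetrizableSpace]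
  refine ⟨fun _ x => isOpen_compl_singleton.isCompletelyMetrizableSpace, fun h => ?_⟩
  have : T1Space X := t1Space_of_t1Space_compl_singleton hcard fun x => have := h x; inferInstance
  have : T2Space X := t2Space_of_t2Space_compl_singleton hcard fun x => have := h x; inferInstance
  have : Nontrivial X := Cardinal.one_lt_iff_nontrivial.1 (lt_of_lt_of_le (by norm_num) hcard)
  obtain ⟨a, b, hab⟩ := exists_pair_ne X
  have := h a
  have := h b
  exact isCompletelyMetrizableSpace_of_compl_singleton hab
end

section
/- Let X be a topological space with at least 3 points. Then X is totally disconnected if and only if for every x ∈ X the subspace X \ {x} is totally disconnected. -/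
open Set

private lemma aux_clopen {X : Type*} [TopologicalSpace X] [PreconnectedSpace X]
    {A B u v : Set X} {x : X}
    (hA : IsOpen A) (hu : IsOpen u) (hv : IsOpen v) (hBo : IsOpen B)
    (hcovA : A ⊆ u ∪ v) (hcover : A ∪ B ∪ {x} = univ)
    (hdisj : A ∩ B = ∅) (hxA : x ∉ A) (hxB : x ∉ B)
    (hxu : x ∈ u)
    (hEne : ((A ∪ {x}) ∩ v).Nonempty) (hBne : B.Nonempty)
    (hemp : (A ∪ {x}) ∩ (u ∩ v) = ∅) : False := by
  have hxv : x ∉ v := by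
    intro hxv
    have : x ∈ (A ∪ {x}) ∩ (u ∩ v) := ⟨Or.inr rfl, hxu, hxv⟩
    rw [hemp] at this; exact this
  set E : Set X := A ∩ v with hE
  have hEopen : IsOpen E := hA.inter hv
  have hEcompl : Eᶜ = u ∪ B := by
    ext y
    simp only [mem_compl_iff, hE, mem_inter_iff, mem_union, not_and]
    constructor
    · intro hy
      have hycov : y ∈ A ∪ B ∪ {x} := hcover ▸ mem_univ y
      rcases hycov with (hyA | hyB) | hyx
      · rcases hcovA hyA with hyu | hyv
        · exact Or.inl hyu
        · exact absurd hyv (hy hyA)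
      · exact Or.inr hyB
      · exact Or.inl (hyx ▸ hxu)
    · rintro (hyu | hyB) hyA hyv
      · have : y ∈ (A ∪ {x}) ∩ (u ∩ v) := ⟨Or.inl hyA, hyu, hyv⟩
        rw [hemp] at this; exact this
      · have : y ∈ A ∩ B := ⟨hyA, hyB⟩
        rw [hdisj] at this; exact this
  have hEclosed : IsClosed E := by
    rw [← isOpen_compl_iff, hEcompl]; exact hu.union hBo
  have hEne' : E.Nonempty := by
    obtain ⟨e, he, hev⟩ := hEne
    rcases he with heA | hex
    · exact ⟨e, heA, hev⟩
    · exact absurd (hex ▸ hev) hxv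
  rcases isClopen_iff.mp ⟨hEclosed, hEopen⟩ with h0 | h1
  · rw [h0] at hEne'; exact hEne'.ne_empty rfl
  · obtain ⟨b, hb⟩ := hBne
    have : b ∈ E := h1 ▸ mem_univ b
    have : b ∈ A ∩ B := ⟨this.1, hb⟩
    rw [hdisj] at this; exact this

theorem totallyDisconnected_reconstructible (X : Type*) [TopologicalSpace X]
    (hcard : 3 ≤ Cardinal.mk X) :
    TotallyDisconnectedSpace X ↔ ∀ x : X, TotallyDisconnectedSpace ({x}ᶜ : Set X) := by
  constructor
  · intro h x; infer_instance
  · intro h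
    -- key lemma: any preconnected set that is not a subsingleton must be univ
    have key : ∀ S : Set X, IsPreconnected S → ¬ S.Subsingleton → S = univ := by
      intro S hS hSns
      by_contra hSu
      obtain ⟨x, hx⟩ := (ne_univ_iff_exists_notMem S).mp hSu
      have hsub : S ⊆ {x}ᶜ := fun y hy => by
        simp only [mem_compl_iff, mem_singleton_iff]
        rintro rfl; exact hx hy
      have htd : IsTotallyDisconnected ({x}ᶜ : Set X) :=
        totallyDisconnectedSpace_subtype_iff.mp (h x)
      exact hSns (htd S hsub hS)
    refine ⟨fun t _ ht => ?_⟩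
    by_contra hts
    have htu : t = univ := key t ht hts
    have hpc : PreconnectedSpace X := ⟨htu ▸ ht⟩
    -- three distinct points
    have hnt : Nontrivial X := Cardinal.one_lt_iff_nontrivial.mp (lt_of_lt_of_le (by norm_num) hcard)
    obtain ⟨p₀, -, -⟩ := hnt.exists_pair_ne
    obtain ⟨p₁, hp₁, -⟩ := Cardinal.three_le hcard p₀ p₀
    obtain ⟨p₂, hp₂₀, hp₂₁⟩ := Cardinal.three_le hcard p₀ p₁
    -- pairs are not preconnected
    have pair_not : ∀ p q : X, p ≠ q → ¬ IsPreconnected {p, q} := by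
      intro p q hpq hpre
      obtain ⟨r, hrp, hrq⟩ := Cardinal.three_le hcard p q
      have : ({p, q} : Set X) = univ := key _ hpre (by
        intro hsub
        exact hpq (hsub (mem_insert p {q}) (mem_insert_of_mem p rfl)))
      have : r ∈ ({p, q} : Set X) := this ▸ mem_univ r
      rcases this with h | h
      · exact hrp h
      · exact hrq h
    -- T1 : singletons are closed
    have T1 : ∀ p : X, IsClosed ({p} : Set X) := by
      intro p
      rw [← isOpen_compl_iff]
      rw [isOpen_iff_forall_mem_open]
      intro q hq
      have hqp : p ≠ q := fun h => hq (h ▸ rfl)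
      have := pair_not p q hqp
      rw [IsPreconnected] at this
      push_neg at this
      obtain ⟨u, v, hu, hv, hcov, hneu, hnev, hempinter⟩ := this
      have hint : ({p, q} : Set X) ∩ (u ∩ v) = ∅ := hempinter
      rcases hcov (mem_insert_of_mem p rfl : q ∈ ({p, q} : Set X)) with hqu | hqv
      · -- q ∈ u ; show p ∉ u
        have hpu : p ∉ u := by
          intro hpu
          obtain ⟨w, hw, hwv⟩ := hnev
          rcases hw with rfl | rfl
          · have : w ∈ ({w, q} : Set X) ∩ (u ∩ v) := ⟨Or.inl rfl, hpu, hwv⟩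
            rw [hint] at this; exact this
          · have : w ∈ ({p, w} : Set X) ∩ (u ∩ v) := ⟨Or.inr rfl, hqu, hwv⟩
            rw [hint] at this; exact this
        exact ⟨u, fun y hy h => hpu (mem_singleton_iff.mp h ▸ hy), hu, hqu⟩
      · have hpv : p ∉ v := by
          intro hpv
          obtain ⟨w, hw, hwu⟩ := hneu
          rcases hw with rfl | rfl
          · have : w ∈ ({w, q} : Set X) ∩ (u ∩ v) := ⟨Or.inl rfl, hwu, hpv⟩
            rw [hint] at this; exact this
          · have : w ∈ ({p, w} : Set X) ∩ (u ∩ v) := ⟨Or.inr rfl, hwu, hqv⟩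
            rw [hint] at this; exact this
        exact ⟨v, fun y hy h => hpv (mem_singleton_iff.mp h ▸ hy), hv, hqv⟩
    -- now derive contradiction: W = {p₀}ᶜ must be disconnected but leads to clopen set
    set x := p₀ with hxdef
    set W : Set X := {x}ᶜ with hW
    have hWopen : IsOpen W := (T1 x).isOpen_compl
    have hWns : ¬ W.Subsingleton := by
      intro hsub
      have h1 : p₁ ∈ W := hp₁
      have h2 : p₂ ∈ W := hp₂₀
      exact hp₂₁ (hsub h2 h1)
    have hWnu : W ≠ univ := by
      intro hW'
      have : x ∈ W := hW' ▸ mem_univ x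
      exact this rfl
    have hWnp : ¬ IsPreconnected W := fun hp => hWnu (key W hp hWns)
    rw [IsPreconnected] at hWnp
    push_neg at hWnp
    obtain ⟨u, v, hu, hv, hcov, hneu, hnev, hempinter⟩ := hWnp
    have hint : W ∩ (u ∩ v) = ∅ := hempinter
    set A : Set X := W ∩ u with hAdef
    set B : Set X := W ∩ v with hBdef
    have hAopen : IsOpen A := hWopen.inter hu
    have hBopen : IsOpen B := hWopen.inter hv
    have hABdisj : A ∩ B = ∅ := by
      rw [← hint]; ext y
      simp only [hAdef, hBdef, mem_inter_iff, mem_empty_iff_false]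
      tauto
    have hxA : x ∉ A := fun h => h.1 rfl
    have hxB : x ∉ B := fun h => h.1 rfl
    have hcover : A ∪ B ∪ {x} = univ := by
      ext y
      simp only [hAdef, hBdef, mem_union, mem_inter_iff, mem_singleton_iff, mem_univ, iff_true]
      by_cases hy : y = x
      · exact Or.inr hy
      · have hyW : y ∈ W := hy
        rcases hcov hyW with h | h
        · exact Or.inl (Or.inl ⟨hyW, h⟩)
        · exact Or.inl (Or.inr ⟨hyW, h⟩)
    -- A ∪ {x} is preconnected
    have hAx : IsPreconnected (A ∪ {x}) := by
      intro u' v' hu' hv' hcov' hne1 hne2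
      by_contra hemp'
      have hemp : (A ∪ {x}) ∩ (u' ∩ v') = ∅ := not_nonempty_iff_eq_empty.mp hemp'
      have hcovA : A ⊆ u' ∪ v' := fun y hy => hcov' (Or.inl hy)
      have hBne : B.Nonempty := by
        obtain ⟨b, hbW, hbv⟩ := hnev; exact ⟨b, hbW, hbv⟩
      rcases hcov' (Or.inr rfl : x ∈ A ∪ {x}) with hxu' | hxv'
      · exact aux_clopen hAopen hu' hv' hBopen hcovA hcover hABdisj hxA hxB hxu' hne2 hBne hemp
      · have hemp2 : (A ∪ {x}) ∩ (v' ∩ u') = ∅ := by rw [inter_comm v' u']; exact hemp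
        have hcovA2 : A ⊆ v' ∪ u' := fun y hy => (hcovA hy).symm
        exact aux_clopen hAopen hv' hu' hBopen hcovA2 hcover hABdisj hxA hxB hxv' hne1 hBne hemp2
    -- A ∪ {x} is not a subsingleton
    have hAns : ¬ (A ∪ {x} : Set X).Subsingleton := by
      intro hsub
      obtain ⟨a, haW, hau⟩ := hneu
      have haA : a ∈ A := ⟨haW, hau⟩
      have : a = x := hsub (Or.inl haA) (Or.inr rfl)
      exact haW (this ▸ rfl)
    have hAuniv : A ∪ {x} = univ := key _ hAx hAns
    obtain ⟨b, hbW, hbv⟩ := hnev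
    have hbB : b ∈ B := ⟨hbW, hbv⟩
    have : b ∈ A ∪ {x} := hAuniv ▸ mem_univ b
    rcases this with hbA | hbx
    · have : b ∈ A ∩ B := ⟨hbA, hbB⟩
      rw [hABdisj] at this; exact this
    · exact hbW hbx
end

section
/- Let X be a connected, separable, T₁ topological space. Then the set of points x ∈ X such that X \ {x} has at least three connected components is countable. -/
/-!
Send a triple cut point `x` to points of a countable dense set, one in each of the three pieces
of `X \ {x}`. This is injective: if `y ≠ x` lies in the piece `U` at `x`, then `X \ U`, the other
two pieces together with `x`, is connected (a relatively clopen part of it avoiding `x` would be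
clopen in `X`), avoids `y`, and meets two different pieces at `y`.
-/

open Set Function

section

variable {X : Type*} [TopologicalSpace X]

structure IsOpenPartition {ι : Type*} (s : Set X) (U : ι → Set X) : Prop where
  isOpen : ∀ i, IsOpen (U i)
  nonempty : ∀ i, (U i).Nonempty
  pairwise_disjoint : Pairwise (Disjoint on U)
  iUnion_eq : ⋃ i, U i = s

namespace IsOpenPartition

variable {ι : Type*} {s : Set X} {U : ι → Set X}

theorem diff_eq_biUnion (h : IsOpenPartition s U) (i : ι) : s \ U i = ⋃ (j) (_ : j ≠ i), U j := by
  ext z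
  simp only [← h.iUnion_eq, mem_sdiff, mem_iUnion, exists_prop]
  constructor
  · rintro ⟨⟨j, hj⟩, hi⟩
    exact ⟨j, fun hji => hi (hji ▸ hj), hj⟩
  · rintro ⟨j, hji, hj⟩
    exact ⟨⟨j, hj⟩, (h.pairwise_disjoint hji).notMem_of_mem_left hj⟩

theorem isOpen_diff (h : IsOpenPartition s U) (i : ι) : IsOpen (s \ U i) := by
  rw [h.diff_eq_biUnion]
  exact isOpen_biUnion fun j _ => h.isOpen j

theorem image_val (hs : IsOpen s) {U : ι → Set s} (h : IsOpenPartition univ U) :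
    IsOpenPartition s (fun i => Subtype.val '' U i) where
  isOpen i := hs.isOpenMap_subtype_val _ (h.isOpen i)
  nonempty i := (h.nonempty i).image _
  pairwise_disjoint _ _ hij := disjoint_image_of_injective Subtype.val_injective
    (h.pairwise_disjoint hij)
  iUnion_eq := by rw [← image_iUnion, h.iUnion_eq, image_univ, Subtype.range_val]

end IsOpenPartition

theorem isOpenPartition_fin_three {s A B C : Set X} (hA : IsOpen A) (hB : IsOpen B)
    (hC : IsOpen C) (hA' : A.Nonempty) (hB' : B.Nonempty) (hC' : C.Nonempty)
    (hAB : Disjoint A B) (hAC : Disjoint A C) (hBC : Disjoint B C) (hs : A ∪ B ∪ C = s) :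
    IsOpenPartition s ![A, B, C] where
  isOpen := Fin.forall_fin_succ.2 ⟨hA, Fin.forall_fin_succ.2 ⟨hB, Fin.forall_fin_one.2 hC⟩⟩
  nonempty := Fin.forall_fin_succ.2 ⟨hA', Fin.forall_fin_succ.2 ⟨hB', Fin.forall_fin_one.2 hC'⟩⟩
  pairwise_disjoint i j hij := by
    fin_cases i <;> fin_cases j <;>
      simp_all [onFun, hAB.symm, hAC.symm, hBC.symm]
  iUnion_eq := by
    rw [← hs]
    ext
    simp [Fin.exists_fin_succ, or_assoc]

theorem isPreconnected_of_isClosed_of_isOpen_diff_singleton [PreconnectedSpace X] {s : Set X}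
    {x : X} (hs : IsClosed s) (hsx : IsOpen (s \ {x})) : IsPreconnected s := by
  have subset_left : ∀ {u v : Set X}, IsOpen u → IsOpen v → s ⊆ u ∪ v → s ∩ (u ∩ v) = ∅ →
      x ∉ s ∩ v → s ⊆ u := by
    intro u v hu hv hsuv huv hx
    have hsv_eq_diff : s ∩ v = s \ u := by
      ext z
      refine ⟨fun hz => ⟨hz.1, fun hzu => ?_⟩, fun hz => ⟨hz.1, (hsuv hz.1).resolve_left hz.2⟩⟩
      exact (eq_empty_iff_forall_notMem.1 huv) z ⟨hz.1, hzu, hz.2⟩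
    have hsv_eq_inter : s ∩ v = (s \ {x}) ∩ v := by
      ext z
      exact ⟨fun hz => ⟨⟨hz.1, fun hzx => hx ((mem_singleton_iff.1 hzx) ▸ hz)⟩, hz.2⟩,
        fun hz => ⟨hz.1.1, hz.2⟩⟩
    have hclopen : IsClopen (s ∩ v) :=
      ⟨hsv_eq_diff ▸ hs.sdiff hu, hsv_eq_inter ▸ hsx.inter hv⟩
    rcases isClopen_iff.1 hclopen with hempty | huniv
    · intro z hz
      exact (hsuv hz).resolve_right fun hzv => (eq_empty_iff_forall_notMem.1 hempty) z ⟨hz, hzv⟩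
    · exact absurd (huniv ▸ mem_univ x) hx
  rw [isPreconnected_iff_subset_of_disjoint]
  intro u v hu hv hsuv huv
  by_cases hx : x ∈ s ∩ v
  · refine .inr (subset_left hv hu (union_comm u v ▸ hsuv) (inter_comm u v ▸ huv) fun hxu => ?_)
    exact (eq_empty_iff_forall_notMem.1 huv) x ⟨hx.1, hxu.2, hx.2⟩
  · exact .inl (subset_left hu hv hsuv huv hx)

theorem IsOpenPartition.isPreconnected_compl [PreconnectedSpace X] {ι : Type*} {x : X}
    {U : ι → Set X} (h : IsOpenPartition {x}ᶜ U) (i : ι) : IsPreconnected (U i)ᶜ := by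
  refine isPreconnected_of_isClosed_of_isOpen_diff_singleton (x := x)
    (h.isOpen i).isClosed_compl ?_
  have : (U i)ᶜ \ {x} = {x}ᶜ \ U i := by
    ext
    simp only [mem_sdiff, mem_compl_iff, and_comm]
  exact this ▸ h.isOpen_diff i

theorem eq_of_forall_mem_isOpenPartition [PreconnectedSpace X] {x y : X} {U V : Fin 3 → Set X}
    (hU : IsOpenPartition {x}ᶜ U) (hV : IsOpenPartition {y}ᶜ V) {a : Fin 3 → X}
    (haU : ∀ i, a i ∈ U i) (haV : ∀ i, a i ∈ V i) : x = y := by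
  by_contra hxy
  obtain ⟨i, hyi⟩ : ∃ i, y ∈ U i := mem_iUnion.1 (hU.iUnion_eq ▸ Ne.symm hxy)
  obtain ⟨j, k, hjk, hij, hik⟩ : ∃ j k : Fin 3, j ≠ k ∧ i ≠ j ∧ i ≠ k := by
    fin_cases i <;> decide
  have mem_compl : ∀ {l}, i ≠ l → a l ∈ (U i)ᶜ :=
    fun hil => (hU.pairwise_disjoint hil).notMem_of_mem_right (haU _)
  have hK_sub : (U i)ᶜ ⊆ V j ∪ ({y}ᶜ \ V j) := by
    rw [union_sdiff_self, ← compl_subset_compl, compl_union]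
    rintro z ⟨-, hz⟩
    rw [compl_compl] at hz ⊢
    exact (mem_singleton_iff.1 hz) ▸ hyi
  have hK_V : (U i)ᶜ ⊆ V j := (hU.isPreconnected_compl i).subset_left_of_subset_union
    (hV.isOpen j) (hV.isOpen_diff j) disjoint_sdiff_right hK_sub ⟨a j, mem_compl hij, haV j⟩
  exact (hV.pairwise_disjoint hjk).notMem_of_mem_right (haV k) (hK_V (mem_compl hik))

theorem countable_setOf_isOpenPartition_compl_singleton [PreconnectedSpace X]
    [TopologicalSpace.SeparableSpace X] :
    {x : X | ∃ U : Fin 3 → Set X, IsOpenPartition {x}ᶜ U}.Countable := by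
  obtain ⟨D, hD, hDd⟩ := TopologicalSpace.exists_countable_dense X
  set S := {x : X | ∃ U : Fin 3 → Set X, IsOpenPartition {x}ᶜ U}
  choose! U hU using fun x (hx : x ∈ S) => hx
  have hpoints : ∀ x ∈ S, ∀ i, ∃ p, p ∈ U x i ∩ D := fun x hx i =>
    hDd.inter_open_nonempty _ ((hU x hx).isOpen i) ((hU x hx).nonempty i)
  choose! a ha using hpoints
  refine MapsTo.countable_of_injOn (t := {f : Fin 3 → X | ∀ i, f i ∈ D})
    (fun x hx i => (ha x hx i).2) (fun x hx y hy hxy => ?_) (countable_pi fun _ => hD)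
  exact eq_of_forall_mem_isOpenPartition (hU x hx) (hU y hy) (fun i => (ha x hx i).1)
    (fun i => hxy ▸ (ha y hy i).1)

end

theorem countably_many_triple_cut_points (X : Type*) [TopologicalSpace X] [T1Space X]
    [ConnectedSpace X] [TopologicalSpace.SeparableSpace X] :
    Set.Countable {x : X | ∃ A B C : Set ({x}ᶜ : Set X),
      IsClopen A ∧ IsClopen B ∧ IsClopen C ∧
      A.Nonempty ∧ B.Nonempty ∧ C.Nonempty ∧
      Disjoint A B ∧ Disjoint A C ∧ Disjoint B C ∧
      A ∪ B ∪ C = Set.univ} := by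
  refine countable_setOf_isOpenPartition_compl_singleton.mono ?_
  rintro x ⟨A, B, C, hA, hB, hC, hA', hB', hC', hAB, hAC, hBC, huniv⟩
  exact ⟨_, (isOpenPartition_fin_three hA.isOpen hB.isOpen hC.isOpen hA' hB' hC' hAB hAC hBC
    huniv).image_val isOpen_compl_singleton⟩
end
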